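/- arXiv:2402.12695 — 5 statements merged into one kernel-verified Lean document; each statement's English description precedes it below -/
import Mathlib

section
/- Let X be a connected 3-valent Cayley graph on a finite abelian group. Then X is 2-spanning cyclable if and only if X is isomorphic to the 3-dimensional cube Q_3 or to the Cartesian product K_2 □ C_n for some n ≥ 4. -/
open SimpleGraph

/-- `H` is a 2-factor of `X`: a spanning subgraph of `X` (on the same vertex set)
in which every vertex has valency 2. -/
def IsTwoFactor {V : Type*} (X H : SimpleGraph V) : Prop :=
  H ≤ X ∧ ∀ v : V, (H.neighborSet v).ncard = 2

/-- The 2-factor `H` separates the vertex set `A`: every connected component (cycle)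
of `H` contains exactly one vertex of `A`; in particular `H` consists of exactly
`A.card` cycles, each containing exactly one vertex of `A`. -/
def SeparatesSet {V : Type*} (H : SimpleGraph V) (A : Finset V) : Prop :=
  ∀ C : H.ConnectedComponent, ∃! a : V, a ∈ A ∧ H.connectedComponentMk a = C

/-- A graph `X` is `k`-spanning cyclable if for every set `A` of `k` distinct vertices
there is a 2-factor of `X` consisting of `k` cycles such that each vertex of `A`
belongs to a distinct cycle. -/
def SpanningCyclable {V : Type*} (X : SimpleGraph V) (k : ℕ) : Prop :=
  ∀ A : Finset V, A.card = k → ∃ H : SimpleGraph V, IsTwoFactor X H ∧ SeparatesSet H A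

/-- The cycle `C_n` on vertex set `ZMod n`: `x` and `y` are adjacent iff `x - y ∈ {1, -1}`. -/
def cycleZMod (n : ℕ) : SimpleGraph (ZMod n) :=
  SimpleGraph.circulantGraph ({1, -1} : Set (ZMod n))

/-- The pseudo-Cartesian product `C_m □_ℓ C_n`: start with `P_m □ C_n` (columns indexed by
`Fin m`, rows by `ZMod n`) and add the edges from `u_{m-1,j}` to `u_{0,j+ℓ}`.
When `ℓ = 0` this is the Cartesian product `C_m □ C_n`. -/
def pseudoProd (m n : ℕ) (l : ZMod n) : SimpleGraph (Fin m × ZMod n) :=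
  SimpleGraph.fromRel (fun u v =>
    (u.1 = v.1 ∧ v.2 = u.2 + 1) ∨
    ((u.1 : ℕ) + 1 = (v.1 : ℕ) ∧ u.2 = v.2) ∨
    ((u.1 : ℕ) = m - 1 ∧ (v.1 : ℕ) = 0 ∧ v.2 = u.2 + l))

/-- The Cayley graph of an (additive) group `G` with connection set `S`:
`x` and `y` are adjacent iff `x - y ∈ S`. -/
def cayleyGraph {G : Type*} [AddGroup G] (S : Finset G) : SimpleGraph G :=
  SimpleGraph.fromRel (fun x y => x - y ∈ S)

/-- The `n`-dimensional hypercube graph `Q_n`: two vertices are adjacent iff they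
differ in exactly one coordinate. -/
def hypercube (n : ℕ) : SimpleGraph (Fin n → Bool) :=
  SimpleGraph.fromRel (fun x y => ∃ i, x i ≠ y i ∧ ∀ j, j ≠ i → x j = y j)

/-!
A symmetric set of three nonzero elements is either three involutions `b₁, b₂, b₃` or
`{a, -a, b}` with `b + b = 0 ≠ a + a`.

For three involutions the group is a quotient of `(ℤ/2)³`. A 2-factor separating two vertices
has two cycles, so at least six vertices; hence the group is all of `(ℤ/2)³` and the graph is
`Q₃`. For `{a, -a, b}`: if `b ∈ ⟨a⟩`, every 2-factor joins `0` to `b`; if `a` has order 3,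
every 2-factor joins `0` to `a`; otherwise the group is `ℤ/2 × ℤ/m` with `m = ord a ≥ 4` and the
graph is the prism `K₂ □ Cₘ`.

Conversely, in a cubic graph the complement of a perfect matching is a 2-factor. In the prism,
deleting all rungs separates the two layers, and cutting the horizontal edges on both sides of
two adjacent columns leaves a 4-cycle and one cycle through all other vertices. Finally
`Q₃ ≅ K₂ □ C₄`.
-/

namespace SimpleGraph

variable {V : Type*} {X H : SimpleGraph V}

theorem Reachable.apply_eq_of_adj {β : Sort*} {f : V → β} (hf : ∀ x y, H.Adj x y → f x = f y)
    {u v : V} (h : H.Reachable u v) : f u = f v := by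
  obtain ⟨p⟩ := h
  induction p with
  | nil => rfl
  | cons hadj _ ih => exact (hf _ _ hadj).trans ih

def deleteMatching (X : SimpleGraph V) (μ : V → V) : SimpleGraph V :=
  X.deleteEdges (Set.range fun x => s(x, μ x))

theorem deleteMatching_adj {μ : V → V} (hμ : Function.Involutive μ) {x y : V} :
    (X.deleteMatching μ).Adj x y ↔ X.Adj x y ∧ y ≠ μ x := by
  simp only [deleteMatching, deleteEdges_adj, Set.mem_range, Sym2.eq_iff, not_exists]
  refine and_congr_right fun _ => ⟨fun h hy => h x (Or.inl ⟨rfl, hy.symm⟩), ?_⟩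
  rintro hy z (⟨rfl, rfl⟩ | ⟨rfl, rfl⟩)
  · exact hy rfl
  · exact hy (hμ z).symm

end SimpleGraph

section TwoFactor

variable {V W : Type*} {X H : SimpleGraph V}

theorem SeparatesSet.not_reachable [DecidableEq V] {u v : V} (huv : u ≠ v)
    (h : SeparatesSet H {u, v}) : ¬ H.Reachable u v := fun hr => by
  obtain ⟨a, -, ha⟩ := h (H.connectedComponentMk u)
  exact huv ((ha u ⟨by simp, rfl⟩).trans (ha v ⟨by simp, ConnectedComponent.sound hr.symm⟩).symm)

theorem separatesSet_pair [DecidableEq V] {u v : V} (huv : ¬ H.Reachable u v)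
    (hcover : ∀ w, H.Reachable u w ∨ H.Reachable v w) : SeparatesSet H {u, v} := by
  intro C
  induction C using ConnectedComponent.ind with | h w => ?_
  rcases hcover w with hw | hw
  · refine ⟨u, ⟨by simp, ConnectedComponent.sound hw⟩, ?_⟩
    rintro a ⟨ha, hC⟩
    rcases Finset.mem_insert.mp ha with rfl | ha
    · rfl
    · rw [Finset.mem_singleton.mp ha] at hC
      exact absurd (hw.trans (ConnectedComponent.exact hC).symm) huv
  · refine ⟨v, ⟨by simp, ConnectedComponent.sound hw⟩, ?_⟩
    rintro a ⟨ha, hC⟩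
    rcases Finset.mem_insert.mp ha with rfl | ha
    · exact absurd (ConnectedComponent.exact hC |>.trans hw.symm) huv
    · exact Finset.mem_singleton.mp ha

/-- Each of the two cycles contains `u` or `v` together with its two neighbours. -/
theorem six_le_card_of_separatesSet [Fintype V] [DecidableEq V]
    (hdeg : ∀ v, (H.neighborSet v).ncard = 2) {u v : V} (huv : u ≠ v)
    (hsep : SeparatesSet H {u, v}) : 6 ≤ Fintype.card V := by
  have hball : ∀ x, (insert x (H.neighborSet x)).ncard = 3 := fun x => by
    rw [Set.ncard_insert_of_notMem (by simp), hdeg]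
  have hdisj : Disjoint (insert u (H.neighborSet u)) (insert v (H.neighborSet v)) := by
    have hreach : ∀ x, ∀ y ∈ insert x (H.neighborSet x), H.Reachable x y := by
      rintro x y (rfl | hy)
      · rfl
      · exact Adj.reachable hy
    refine Set.disjoint_left.mpr fun y hu hv => hsep.not_reachable huv ?_
    exact (hreach u y hu).trans (hreach v y hv).symm
  calc 6 = (insert u (H.neighborSet u) ∪ insert v (H.neighborSet v)).ncard := by
        rw [Set.ncard_union_eq hdisj, hball, hball]
    _ ≤ Fintype.card V := by
        rw [← Nat.card_eq_fintype_card, ← Set.ncard_univ]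
        exact Set.ncard_le_ncard (Set.subset_univ _)

theorem SpanningCyclable.six_le_card [Fintype V] [DecidableEq V] (h : SpanningCyclable X 2)
    (hV : 2 ≤ Fintype.card V) : 6 ≤ Fintype.card V := by
  obtain ⟨A, -, hA⟩ := Finset.exists_subset_card_eq (s := Finset.univ) hV
  obtain ⟨H, ⟨-, hdeg⟩, hsep⟩ := h A hA
  obtain ⟨u, v, huv, rfl⟩ := Finset.card_eq_two.mp hA
  exact six_le_card_of_separatesSet hdeg huv hsep

theorem IsTwoFactor.comap {Y H : SimpleGraph W} (e : X ≃g Y) (h : IsTwoFactor Y H) :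
    IsTwoFactor X (H.comap e) := by
  refine ⟨fun x y hxy => e.map_adj_iff.mp (h.1 hxy), fun v => ?_⟩
  have : (H.comap e).neighborSet v = e ⁻¹' H.neighborSet (e v) := rfl
  rw [this, Set.ncard_preimage_of_injective_subset_range e.injective (by simp), h.2]

theorem SeparatesSet.comap [DecidableEq W] {H : SimpleGraph W} (e : V ≃ W) {A : Finset V}
    (h : SeparatesSet H (A.map e.toEmbedding)) : SeparatesSet (H.comap e) A := by
  have hreach : ∀ u v, (H.comap e).Reachable u v ↔ H.Reachable (e u) (e v) := fun u v =>
    (Iso.reachable_iff (φ := Iso.comap e H)).symm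
  intro C
  induction C using ConnectedComponent.ind with | h w => ?_
  obtain ⟨a', ⟨ha', hC⟩, huniq⟩ := h (H.connectedComponentMk (e w))
  obtain ⟨a, ha, rfl⟩ := Finset.mem_map.mp ha'
  refine ⟨a, ⟨ha, ConnectedComponent.sound ((hreach a w).mpr (ConnectedComponent.exact hC))⟩, ?_⟩
  rintro b ⟨hb, hbC⟩
  refine e.injective (huniq (e b) ⟨Finset.mem_map_of_mem _ hb, ?_⟩)
  exact ConnectedComponent.sound ((hreach b w).mp (ConnectedComponent.exact hbC))

theorem SpanningCyclable.of_iso [DecidableEq W] {Y : SimpleGraph W} (e : X ≃g Y) {k : ℕ}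
    (h : SpanningCyclable Y k) : SpanningCyclable X k := by
  intro A hA
  obtain ⟨H, hH, hsep⟩ := h (A.map e.toEquiv.toEmbedding) (by rw [Finset.card_map, hA])
  exact ⟨H.comap e, hH.comap e, hsep.comap e.toEquiv⟩

theorem IsTwoFactor.adj_of_not_adj (hH : IsTwoFactor X H) {x y z : V}
    (hX : (X.neighborSet x).ncard = 3) (hxy : X.Adj x y) (hxy' : ¬ H.Adj x y) (hxz : X.Adj x z)
    (hzy : z ≠ y) : H.Adj x z := by
  have hsub : H.neighborSet x ⊆ X.neighborSet x \ {y} :=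
    fun w hw => ⟨hH.1 hw, by rintro rfl; exact hxy' hw⟩
  have hfin : (X.neighborSet x \ {y}).Finite := (Set.finite_of_ncard_ne_zero (by omega)).sdiff
  have heq := Set.eq_of_subset_of_ncard_le hsub
    (by rw [Set.ncard_sdiff_singleton_of_mem (s := X.neighborSet x) hxy, hX, hH.2]) hfin
  exact heq.symm.subset ⟨hxz, hzy⟩

theorem isTwoFactor_deleteMatching {μ : V → V} (hμ : Function.Involutive μ)
    (hadj : ∀ x, X.Adj x (μ x)) (hX : ∀ x, (X.neighborSet x).ncard = 3) :
    IsTwoFactor X (X.deleteMatching μ) := by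
  refine ⟨fun x y h => ((deleteMatching_adj hμ).mp h).1, fun x => ?_⟩
  have : (X.deleteMatching μ).neighborSet x = X.neighborSet x \ {μ x} := by
    ext y
    exact deleteMatching_adj hμ
  rw [this, Set.ncard_sdiff_singleton_of_mem (s := X.neighborSet x) (hadj x), hX]

end TwoFactor

theorem ZMod.natCast_ne_zero_of_pos_of_lt {n k : ℕ} (h0 : 0 < k) (hk : k < n) :
    (k : ZMod n) ≠ 0 := by
  rw [Ne, ZMod.natCast_eq_zero_iff]
  exact Nat.not_dvd_of_pos_of_lt h0 hk

theorem Fin.two_ne_iff_eq_rev {s t : Fin 2} : s ≠ t ↔ t = s.rev := by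
  fin_cases s <;> fin_cases t <;> decide

theorem Fin.rev_ne_self_of_two (s : Fin 2) : s.rev ≠ s := by
  fin_cases s <;> decide

section Prism

variable {n : ℕ}

/-- The prism `K₂ □ Cₙ`: layers are indexed by `Fin 2`, columns by `ZMod n`. -/
abbrev prism (n : ℕ) : SimpleGraph (Fin 2 × ZMod n) := (⊤ : SimpleGraph (Fin 2)) □ cycleZMod n

theorem cycleZMod_adj (hn : 2 ≤ n) {y z : ZMod n} :
    (cycleZMod n).Adj y z ↔ z = y + 1 ∨ y = z + 1 := by
  have h1 : (1 : ZMod n) ≠ 0 := by exact_mod_cast ZMod.natCast_ne_zero_of_pos_of_lt one_pos hn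
  simp only [cycleZMod, circulantGraph_adj, Set.mem_insert_iff, Set.mem_singleton_iff]
  constructor
  · rintro ⟨-, (h | h) | (h | h)⟩ <;> [right; left; left; right] <;>
      first | linear_combination h | linear_combination -h
  · rintro (rfl | rfl) <;> refine ⟨by simpa using h1, ?_⟩ <;> simp

theorem prism_adj (hn : 2 ≤ n) {s t : Fin 2} {y z : ZMod n} :
    (prism n).Adj (s, y) (t, z) ↔ (t = s.rev ∧ z = y) ∨ (t = s ∧ (z = y + 1 ∨ y = z + 1)) := by
  rw [boxProd_adj, top_adj, cycleZMod_adj hn, Fin.two_ne_iff_eq_rev]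
  simp only [eq_comm (a := y), eq_comm (a := s)]
  tauto

theorem prism_ncard_neighborSet (hn : 3 ≤ n) (x : Fin 2 × ZMod n) :
    ((prism n).neighborSet x).ncard = 3 := by
  obtain ⟨s, y⟩ := x
  have h2 : (2 : ZMod n) ≠ 0 := by exact_mod_cast ZMod.natCast_ne_zero_of_pos_of_lt two_pos hn
  refine Set.ncard_eq_three.mpr ⟨(s.rev, y), (s, y + 1), (s, y - 1), ?_, ?_, ?_, ?_⟩
  · simp [Prod.ext_iff, Fin.rev_ne_self_of_two]
  · simp [Prod.ext_iff, Fin.rev_ne_self_of_two]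
  · intro h
    apply h2
    linear_combination (Prod.ext_iff.mp h).2
  · ext ⟨t, z⟩
    simp only [mem_neighborSet, prism_adj (by omega : 2 ≤ n), Set.mem_insert_iff,
      Set.mem_singleton_iff, Prod.mk.injEq, eq_sub_iff_add_eq, eq_comm (b := y)]
    tauto

/-- Cut the horizontal edges from column `y` to `y + 1` for `y ∈ P`; at a column incident to no
cut, match the two vertices by their rung. -/
def prismMatching (P : Finset (ZMod n)) (x : Fin 2 × ZMod n) : Fin 2 × ZMod n :=
  if x.2 ∈ P then (x.1, x.2 + 1) else if x.2 - 1 ∈ P then (x.1, x.2 - 1) else (x.1.rev, x.2)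

variable {P : Finset (ZMod n)}

theorem prismMatching_involutive (hP : ∀ y ∈ P, y + 1 ∉ P) :
    Function.Involutive (prismMatching P) := by
  rintro ⟨s, y⟩
  by_cases hy : y ∈ P
  · simp [prismMatching, hy, hP y hy]
  by_cases hy' : y - 1 ∈ P
  · have := hP _ hy'
    simp_all [prismMatching]
  · simp [prismMatching, hy, hy']

theorem prism_adj_prismMatching (hn : 2 ≤ n) (x : Fin 2 × ZMod n) :
    (prism n).Adj x (prismMatching P x) := by
  obtain ⟨s, y⟩ := x
  unfold prismMatching
  split_ifs <;> rw [prism_adj hn] <;> simp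

def prismFactor (P : Finset (ZMod n)) : SimpleGraph (Fin 2 × ZMod n) :=
  (prism n).deleteMatching (prismMatching P)

theorem isTwoFactor_prismFactor (hn : 3 ≤ n) (hP : ∀ y ∈ P, y + 1 ∉ P) :
    IsTwoFactor (prism n) (prismFactor P) :=
  isTwoFactor_deleteMatching (prismMatching_involutive hP) (prism_adj_prismMatching (by omega))
    (prism_ncard_neighborSet hn)

theorem prismFactor_adj (hn : 3 ≤ n) (hP : ∀ y ∈ P, y + 1 ∉ P) {s t : Fin 2} {y z : ZMod n} :
    (prismFactor P).Adj (s, y) (t, z) ↔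
      (t = s.rev ∧ z = y ∧ (y ∈ P ∨ y - 1 ∈ P)) ∨
        (t = s ∧ ((z = y + 1 ∧ y ∉ P) ∨ (y = z + 1 ∧ z ∉ P))) := by
  have h2 : (2 : ZMod n) ≠ 0 := by exact_mod_cast ZMod.natCast_ne_zero_of_pos_of_lt two_pos hn
  rw [prismFactor, deleteMatching_adj (prismMatching_involutive hP), prism_adj (by omega)]
  unfold prismMatching
  split_ifs <;> simp only [ne_eq, Prod.mk.injEq] <;> grind

theorem prismFactor_empty_adj (hn : 3 ≤ n) {s t : Fin 2} {y z : ZMod n} :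
    (prismFactor (∅ : Finset (ZMod n))).Adj (s, y) (t, z) ↔ t = s ∧ (z = y + 1 ∨ y = z + 1) := by
  rw [prismFactor_adj hn (by simp)]
  simp

theorem prismFactor_empty_reachable (hn : 3 ≤ n) (s : Fin 2) (y z : ZMod n) :
    (prismFactor (∅ : Finset (ZMod n))).Reachable (s, y) (s, z) := by
  have : NeZero n := ⟨by omega⟩
  have hstep : ∀ k : ℕ, (prismFactor ∅).Reachable (s, y) (s, y + k) := by
    intro k
    induction k with
    | zero => simp
    | succ k ih =>
      refine ih.trans (Adj.reachable ((prismFactor_empty_adj hn).mpr ⟨rfl, Or.inl ?_⟩))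
      push_cast
      ring
  simpa using hstep (z - y).val

theorem separatesSet_prismFactor_empty (hn : 3 ≤ n) {u v : Fin 2 × ZMod n} (h : u.1 ≠ v.1) :
    SeparatesSet (prismFactor ∅) {u, v} := by
  refine separatesSet_pair (fun huv => h (huv.apply_eq_of_adj (f := Prod.fst) ?_)) fun w => ?_
  · rintro ⟨s, y⟩ ⟨t, z⟩ hadj
    exact ((prismFactor_empty_adj hn).mp hadj).1.symm
  · obtain ⟨s, y⟩ := u
    obtain ⟨t, z⟩ := v
    obtain ⟨r, x⟩ := w
    dsimp only at h
    rcases (by omega : r = s ∨ r = t) with rfl | rfl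
    · exact Or.inl (prismFactor_empty_reachable hn _ _ _)
    · exact Or.inr (prismFactor_empty_reachable hn _ _ _)

/-- The 2-factor made of the 4-cycle on the columns `c, c + 1` and one cycle through all the
other vertices. -/
def squareFactor (c : ZMod n) : SimpleGraph (Fin 2 × ZMod n) :=
  prismFactor {c - 1, c + 1}

theorem squareFactor_noConsecutive (hn : 4 ≤ n) (c : ZMod n) :
    ∀ y ∈ ({c - 1, c + 1} : Finset (ZMod n)), y + 1 ∉ ({c - 1, c + 1} : Finset (ZMod n)) := by
  have h1 : (1 : ZMod n) ≠ 0 := by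
    exact_mod_cast ZMod.natCast_ne_zero_of_pos_of_lt one_pos (by omega)
  have h3 : (3 : ZMod n) ≠ 0 := by
    exact_mod_cast ZMod.natCast_ne_zero_of_pos_of_lt three_pos (by omega)
  simp only [Finset.mem_insert, Finset.mem_singleton]
  grind

theorem squareFactor_adj (hn : 4 ≤ n) {c : ZMod n} {s t : Fin 2} {y z : ZMod n} :
    (squareFactor c).Adj (s, y) (t, z) ↔
      (t = s.rev ∧ z = y ∧ (y = c - 1 ∨ y = c + 1 ∨ y - 1 = c - 1 ∨ y - 1 = c + 1)) ∨
        (t = s ∧ ((z = y + 1 ∧ y ≠ c - 1 ∧ y ≠ c + 1) ∨ (y = z + 1 ∧ z ≠ c - 1 ∧ z ≠ c + 1))) := by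
  rw [squareFactor, prismFactor_adj (by omega) (squareFactor_noConsecutive hn c)]
  simp only [Finset.mem_insert, Finset.mem_singleton, not_or, or_assoc, ne_eq]

theorem squareFactor_reachable_square (hn : 4 ≤ n) {c : ZMod n} (x : Fin 2 × ZMod n)
    (hx : x.2 = c ∨ x.2 = c + 1) : (squareFactor c).Reachable x (0, c) := by
  have h1 : (1 : ZMod n) ≠ 0 := by
    exact_mod_cast ZMod.natCast_ne_zero_of_pos_of_lt one_pos (by omega)
  have hrung : ∀ s, (squareFactor c).Reachable (s, c) (0, c) := by
    intro s
    fin_cases s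
    · rfl
    · refine Adj.reachable ((squareFactor_adj hn).mpr (Or.inl ⟨rfl, rfl, ?_⟩))
      simp
  obtain ⟨s, y⟩ := x
  rcases hx with rfl | rfl
  · exact hrung s
  · refine Adj.reachable ((squareFactor_adj hn).mpr (Or.inr ⟨rfl, Or.inr ⟨rfl, ?_, ?_⟩⟩)) |>.trans
      (hrung s)
    · intro h
      exact h1 (by linear_combination h)
    · intro h
      exact h1 (by linear_combination -h)

theorem squareFactor_reachable_outside (hn : 4 ≤ n) {c : ZMod n} (x : Fin 2 × ZMod n)
    (hx : x.2 ≠ c) (hx' : x.2 ≠ c + 1) : (squareFactor c).Reachable x (0, c + 2) := by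
  have : NeZero n := ⟨by omega⟩
  have hcol : ∀ j : ℕ, j + 2 < n → ∀ s, (squareFactor c).Reachable (s, c + 2 + j) (0, c + 2) := by
    intro j hj s
    induction j with
    | zero =>
      fin_cases s
      · simp
      · refine Adj.reachable ((squareFactor_adj hn).mpr (Or.inl ⟨rfl, by simp, ?_⟩))
        right; right; right
        ring
    | succ j ih =>
      refine Adj.reachable ((squareFactor_adj hn).mpr (Or.inr ⟨rfl, Or.inr ⟨?_, ?_, ?_⟩⟩))
        |>.trans (ih (by omega))
      · push_cast
        ring
      · intro h
        apply ZMod.natCast_ne_zero_of_pos_of_lt (n := n) (k := j + 3) (by omega) (by omega)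
        push_cast
        linear_combination h
      · intro h
        apply ZMod.natCast_ne_zero_of_pos_of_lt (n := n) (k := j + 1) (by omega) (by omega)
        push_cast
        linear_combination h
  obtain ⟨s, y⟩ := x
  set j := (y - c - 2).val with hj
  have hy : y = c + 2 + j := by simp [hj]
  refine hy ▸ hcol j ?_ s
  by_contra hjn
  have hcast : ((j + 2 : ℕ) : ZMod n) = y - c := by
    push_cast
    linear_combination -hy
  have hjlt : j < n := ZMod.val_lt _
  rcases (by omega : j + 2 = n ∨ j + 2 = n + 1) with h | h
  · rw [h, ZMod.natCast_self] at hcast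
    exact hx (by linear_combination -hcast)
  · rw [h, Nat.cast_succ, ZMod.natCast_self, zero_add] at hcast
    exact hx' (by linear_combination -hcast)

theorem separatesSet_squareFactor (hn : 4 ≤ n) {u v : Fin 2 × ZMod n} (hv : v.2 ≠ u.2)
    (hv' : v.2 ≠ u.2 + 1) : SeparatesSet (squareFactor u.2) {u, v} := by
  set c := u.2 with hc
  have hstep : ∀ y z : ZMod n, z = y + 1 → y ≠ c - 1 → y ≠ c + 1 →
      (y = c ∨ y = c + 1 ↔ z = c ∨ z = c + 1) := by
    rintro y z rfl h₁ h₂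
    constructor
    · rintro (rfl | rfl)
      · exact Or.inr rfl
      · exact absurd rfl h₂
    · rintro (h | h)
      · exact absurd (by linear_combination h) h₁
      · exact Or.inl (by linear_combination h)
  have hinv : ∀ x y, (squareFactor c).Adj x y →
      (x.2 = c ∨ x.2 = c + 1 ↔ y.2 = c ∨ y.2 = c + 1) := by
    rintro ⟨s, y⟩ ⟨t, z⟩ h
    rcases (squareFactor_adj hn).mp h with ⟨-, rfl, -⟩ | ⟨-, ⟨hz, hy₁, hy₂⟩ | ⟨hy, hz₁, hz₂⟩⟩
    · rfl
    · exact hstep y z hz hy₁ hy₂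
    · exact (hstep z y hy hz₁ hz₂).symm
  refine separatesSet_pair (fun huv => ?_) fun w => ?_
  · have := huv.apply_eq_of_adj (fun x y h => propext (hinv x y h))
    exact (this.mp (Or.inl rfl)).elim hv hv'
  · by_cases hw : w.2 = c ∨ w.2 = c + 1
    · exact Or.inl ((squareFactor_reachable_square hn u (Or.inl rfl)).trans
        (squareFactor_reachable_square hn w hw).symm)
    · rw [not_or] at hw
      exact Or.inr ((squareFactor_reachable_outside hn v hv hv').trans
        (squareFactor_reachable_outside hn w hw.1 hw.2).symm)

theorem prism_spanningCyclable (hn : 4 ≤ n) : SpanningCyclable (prism n) 2 := by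
  intro A hA
  obtain ⟨u, v, huv, rfl⟩ := Finset.card_eq_two.mp hA
  by_cases hcol : v.2 = u.2
  · exact ⟨prismFactor ∅, isTwoFactor_prismFactor (by omega) (by simp),
      separatesSet_prismFactor_empty (by omega) fun h => huv (Prod.ext h hcol.symm)⟩
  by_cases hnext : v.2 = u.2 + 1
  · refine ⟨squareFactor v.2, isTwoFactor_prismFactor (by omega) (squareFactor_noConsecutive hn _),
      Finset.pair_comm u v ▸ separatesSet_squareFactor hn (Ne.symm hcol) fun h => ?_⟩
    have h2 : (2 : ZMod n) ≠ 0 := by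
      exact_mod_cast ZMod.natCast_ne_zero_of_pos_of_lt (n := n) two_pos (by omega)
    exact h2 (by linear_combination -hnext - h)
  · exact ⟨squareFactor u.2, isTwoFactor_prismFactor (by omega) (squareFactor_noConsecutive hn _),
      separatesSet_squareFactor hn hcol hnext⟩

instance : DecidableRel (hypercube 3).Adj := fun f g =>
  decidable_of_iff _ (fromRel_adj _ f g).symm

instance : DecidableRel (cycleZMod 4).Adj := fun y z =>
  decidable_of_iff _ (cycleZMod_adj (by norm_num)).symm

instance : DecidableRel (prism 4).Adj := fun _ _ =>
  decidable_of_iff _ boxProd_adj.symm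

/-- The first two coordinates are read as a Gray code along the 4-cycle. -/
def cubeToPrism (f : Fin 3 → Bool) : Fin 2 × ZMod 4 :=
  (if f 2 then 1 else 0, if f 0 then (if f 1 then 2 else 1) else (if f 1 then 3 else 0))

theorem cubeToPrism_bijective : Function.Bijective cubeToPrism := by decide

theorem prism_adj_cubeToPrism :
    ∀ f g, (prism 4).Adj (cubeToPrism f) (cubeToPrism g) ↔ (hypercube 3).Adj f g := by
  decide

theorem hypercube_three_spanningCyclable : SpanningCyclable (hypercube 3) 2 :=
  (prism_spanningCyclable le_rfl).of_iso
    ⟨Equiv.ofBijective cubeToPrism cubeToPrism_bijective, prism_adj_cubeToPrism _ _⟩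

end Prism

theorem AddMonoidHom.surjective_of_closure_eq_top {A G : Type*} [AddGroup A] [AddGroup G]
    (φ : A →+ G) {S : Set G} (hclos : AddSubgroup.closure S = ⊤) (hS : S ⊆ Set.range φ) :
    Function.Surjective φ := fun g =>
  (AddSubgroup.closure_le φ.range).mpr (by rwa [φ.coe_range]) (hclos ▸ AddSubgroup.mem_top g)

section Cayley

variable {G : Type*} [AddCommGroup G] {S : Finset G}

theorem cayleyGraph_adj (hsymm : ∀ s ∈ S, -s ∈ S) {x y : G} :
    (cayleyGraph S).Adj x y ↔ x ≠ y ∧ x - y ∈ S := by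
  rw [cayleyGraph, fromRel_adj, or_iff_left_of_imp fun h => by simpa using hsymm _ h]

theorem closure_eq_top_of_connected (hconn : (cayleyGraph S).Connected) :
    AddSubgroup.closure (S : Set G) = ⊤ := by
  refine eq_top_iff.mpr fun g _ => ?_
  have hreach : (cayleyGraph S).Reachable 0 g := hconn.preconnected 0 g
  have hcoset := hreach.apply_eq_of_adj
    (f := ((↑) : G → G ⧸ AddSubgroup.closure (S : Set G))) fun x y hxy => by
      rw [QuotientAddGroup.eq]
      rcases (fromRel_adj _ x y).mp hxy |>.2 with h | h
      · simpa [neg_add_eq_sub] using AddSubgroup.neg_mem _ (AddSubgroup.subset_closure h)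
      · simpa [neg_add_eq_sub] using AddSubgroup.subset_closure h
  simpa using QuotientAddGroup.eq.mp hcoset

def cayleyGraphIso {G A : Type*} [AddGroup G] [AddGroup A] {S : Finset G} {T : Finset A}
    (e : A ≃+ G)
    (he : ∀ a, e a ∈ S ↔ a ∈ T) : cayleyGraph T ≃g cayleyGraph S where
  toEquiv := e.toEquiv
  map_rel_iff' {a b} := by
    simp only [cayleyGraph, fromRel_adj, AddEquiv.toEquiv_eq_coe, EquivLike.coe_coe, ne_eq,
      EmbeddingLike.apply_eq_iff_eq, ← map_sub, he]

theorem cayleyGraph_adj_add (h0 : (0 : G) ∉ S) (hsymm : ∀ s ∈ S, -s ∈ S) {x s : G} :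
    (cayleyGraph S).Adj x (x + s) ↔ s ∈ S := by
  rw [cayleyGraph_adj hsymm, sub_add_cancel_left]
  refine ⟨fun ⟨_, h⟩ => by simpa using hsymm _ h, fun hs => ⟨fun h => h0 ?_, hsymm _ hs⟩⟩
  rwa [left_eq_add.mp h] at hs

theorem cayleyGraph_ncard_neighborSet (h0 : (0 : G) ∉ S) (hsymm : ∀ s ∈ S, -s ∈ S) (x : G) :
    ((cayleyGraph S).neighborSet x).ncard = S.card := by
  have : (cayleyGraph S).neighborSet x = (x + ·) '' S := by
    ext y
    rw [mem_neighborSet, ← add_sub_cancel x y, cayleyGraph_adj_add h0 hsymm]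
    simp [neg_add_eq_sub]
  rw [this, Set.ncard_image_of_injective _ (add_right_injective x), Set.ncard_coe_finset]

end Cayley

def boolEquivZModTwo : Bool ≃ ZMod 2 where
  toFun b := if b then 1 else 0
  invFun x := decide (x = 1)
  left_inv := by decide
  right_inv := by decide

theorem boolEquivZModTwo_sub_eq_one_iff {a b : Bool} :
    boolEquivZModTwo a - boolEquivZModTwo b = 1 ↔ a ≠ b := by
  decide +revert

def hypercubeIsoCayleyGraph (n : ℕ) :
    hypercube n ≃g cayleyGraph (Finset.univ.image fun i : Fin n => Pi.single i (1 : ZMod 2)) where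
  toEquiv := Equiv.arrowCongr (Equiv.refl _) boolEquivZModTwo
  map_rel_iff' {f g} := by
    have key : ∀ f g : Fin n → Bool,
        (fun i => boolEquivZModTwo (f i)) - (fun i => boolEquivZModTwo (g i)) ∈
            Finset.univ.image (fun i : Fin n => Pi.single i (1 : ZMod 2)) ↔
          ∃ i, f i ≠ g i ∧ ∀ j, j ≠ i → f j = g j := by
      intro f g
      simp only [Finset.mem_image, Finset.mem_univ, true_and, funext_iff, Pi.sub_apply]
      refine exists_congr fun i => ⟨fun h => ⟨?_, fun j hj => ?_⟩, fun ⟨hi, hj⟩ j => ?_⟩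
      · simpa [← boolEquivZModTwo_sub_eq_one_iff] using (h i).symm
      · simpa [hj, sub_eq_zero] using (h j).symm
      · by_cases hji : j = i
        · subst hji
          simpa [← boolEquivZModTwo_sub_eq_one_iff, eq_comm] using hi
        · simp [hji, hj j hji]
    simp only [cayleyGraph, hypercube, fromRel_adj, ne_eq, EmbeddingLike.apply_eq_iff_eq]
    exact and_congr_right fun _ => or_congr (key f g) (key g f)

section Involutions

variable {G ι : Type*} [AddCommGroup G] [Fintype ι]

def involutionHom (b : ι → G) (hb : ∀ i, b i + b i = 0) : (ι → ZMod 2) →+ G :=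
  ∑ i, (ZMod.lift 2 ⟨zmultiplesHom G (b i), by simpa [two_zsmul] using hb i⟩).comp
    (Pi.evalAddMonoidHom _ i)

theorem involutionHom_single [DecidableEq ι] (b : ι → G) (hb : ∀ i, b i + b i = 0) (i : ι) :
    involutionHom b hb (Pi.single i 1) = b i := by
  rw [involutionHom, AddMonoidHom.finsetSum_apply, Finset.sum_eq_single i]
  · simpa using ZMod.lift_coe 2 ⟨zmultiplesHom G (b i), _⟩ 1
  · intro j _ hji
    simp [hji]
  · simp

theorem nonempty_cayleyGraph_iso_hypercube [Fintype G] {n : ℕ} {S : Finset G} (b : Fin n → G)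
    (hb : ∀ i, b i + b i = 0) (hS : ∀ s, s ∈ S ↔ ∃ i, b i = s)
    (hclos : AddSubgroup.closure (S : Set G) = ⊤) (hG : 2 ^ n < 2 * Fintype.card G) :
    Nonempty (cayleyGraph S ≃g hypercube n) := by
  set φ := involutionHom b hb
  have hsurj : Function.Surjective φ := φ.surjective_of_closure_eq_top hclos fun s hs => by
    obtain ⟨i, rfl⟩ := (hS s).mp hs
    exact ⟨Pi.single i 1, involutionHom_single b hb i⟩
  have hcard : Fintype.card G = 2 ^ n := by
    have hdvd := AddSubgroup.card_dvd_of_surjective φ hsurj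
    simp only [Nat.card_eq_fintype_card, Fintype.card_fun, ZMod.card, Fintype.card_fin] at hdvd
    exact (Nat.eq_of_dvd_of_lt_two_mul (by positivity) hdvd hG).symm
  have hbij : Function.Bijective φ :=
    (Fintype.bijective_iff_surjective_and_card φ).mpr ⟨hsurj, by simp [hcard]⟩
  set e := AddEquiv.ofBijective φ hbij
  have he : ∀ x, e x ∈ S ↔ x ∈ Finset.univ.image fun i : Fin n => Pi.single i (1 : ZMod 2) := by
    intro x
    simp only [Finset.mem_image, Finset.mem_univ, true_and, hS]
    refine exists_congr fun i => ?_
    rw [← involutionHom_single b hb i]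
    exact ⟨fun h => hbij.1 h, fun h => h ▸ rfl⟩
  exact ⟨(cayleyGraphIso e he).symm.trans (hypercubeIsoCayleyGraph n).symm⟩

end Involutions

theorem finEquiv_two_sub_eq_one_iff {s t : Fin 2} :
    ZMod.finEquiv 2 s - ZMod.finEquiv 2 t = 1 ↔ s ≠ t := by
  decide +revert

def prismIsoCayleyGraph (n : ℕ) :
    prism n ≃g cayleyGraph ({(1, 0), (0, 1), (0, -1)} : Finset (ZMod 2 × ZMod n)) where
  toEquiv := (ZMod.finEquiv 2).toEquiv.prodCongr (Equiv.refl _)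
  map_rel_iff' {p q} := by
    obtain ⟨s, y⟩ := p
    obtain ⟨t, z⟩ := q
    simp only [cayleyGraph, fromRel_adj, boxProd_adj, top_adj, cycleZMod, circulantGraph_adj,
      Equiv.prodCongr_apply, Prod.map, RingEquiv.toEquiv_eq_coe, EquivLike.coe_coe,
      Equiv.refl_apply,
      ne_eq, Prod.mk.injEq, Finset.mem_insert, Finset.mem_singleton, Prod.mk_sub_mk,
      finEquiv_two_sub_eq_one_iff, EmbeddingLike.apply_eq_iff_eq,
      Set.mem_insert_iff, Set.mem_singleton_iff, sub_eq_zero]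
    tauto

section PairHom

variable {G : Type*} [AddCommGroup G] {b : G}

noncomputable def pairHom (a : G) {b : G} (hb : b + b = 0) : ZMod 2 × ZMod (addOrderOf a) →+ G :=
  (ZMod.lift 2 ⟨zmultiplesHom G b, by simpa [two_zsmul] using hb⟩).coprod
    (ZMod.lift _ ⟨zmultiplesHom G a, by simp [addOrderOf_nsmul_eq_zero]⟩)

theorem pairHom_intCast (a : G) (hb : b + b = 0) (ε k : ℤ) :
    pairHom a hb (ε, k) = ε • b + k • a := by
  simp [pairHom]

theorem pairHom_injective (a : G) (hb : b + b = 0) (hba : b ∉ AddSubgroup.zmultiples a) :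
    Function.Injective (pairHom a hb) := by
  refine (injective_iff_map_eq_zero _).mpr fun ⟨ε, k⟩ h => ?_
  obtain ⟨j, rfl⟩ := ZMod.intCast_surjective k
  rcases (by decide : ∀ ε : ZMod 2, ε = 0 ∨ ε = 1) ε with rfl | rfl
  · rw [← Int.cast_zero, pairHom_intCast, zero_smul, zero_add,
      ← addOrderOf_dvd_iff_zsmul_eq_zero, ← ZMod.intCast_zmod_eq_zero_iff_dvd] at h
    simp [h]
  · rw [← Int.cast_one, pairHom_intCast, one_smul, ← eq_neg_iff_add_eq_zero, ← neg_zsmul] at h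
    exact absurd ⟨-j, h.symm⟩ hba

end PairHom

section Pair

variable {G : Type*} [AddCommGroup G] [DecidableEq G] {S : Finset G} {a b : G}

theorem forall_add_self_eq_zero_or_exists_eq_pair (hsymm : ∀ s ∈ S, -s ∈ S) (hcard : S.card = 3) :
    (∀ s ∈ S, s + s = 0) ∨ ∃ a b : G, a + a ≠ 0 ∧ b + b = 0 ∧ S = {a, -a, b} := by
  by_cases hinv : ∀ s ∈ S, s + s = 0
  · exact Or.inl hinv
  push Not at hinv
  obtain ⟨a, haS, ha⟩ := hinv
  have hna : -a ≠ a := fun h => ha (by nth_rw 1 [← h]; exact neg_add_cancel a)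
  have hnaS : -a ∈ S.erase a := Finset.mem_erase.mpr ⟨hna, hsymm a haS⟩
  obtain ⟨b, hb⟩ : ∃ b, (S.erase a).erase (-a) = {b} := by
    rw [← Finset.card_eq_one, Finset.card_erase_of_mem hnaS, Finset.card_erase_of_mem haS, hcard]
  have hbS : b ∈ (S.erase a).erase (-a) := hb ▸ Finset.mem_singleton_self b
  have hS : S = {a, -a, b} := by
    rw [← hb, Finset.insert_erase hnaS, Finset.insert_erase haS]
  refine Or.inr ⟨a, b, ha, ?_, hS⟩
  have hnb : -b ∈ S := hsymm b (Finset.mem_of_mem_erase (Finset.mem_of_mem_erase hbS))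
  rw [hS, Finset.mem_insert, Finset.mem_insert, Finset.mem_singleton, neg_eq_iff_eq_neg,
    neg_inj] at hnb
  simp only [Finset.mem_erase] at hbS
  rcases hnb with h | h | h
  · exact absurd h hbS.1
  · exact absurd h hbS.2.1
  · exact neg_eq_iff_add_eq_zero.mp h

theorem neg_mem_of_eq_pair (hb : b + b = 0) (hS : S = {a, -a, b}) : ∀ s ∈ S, -s ∈ S := by
  subst hS
  simp [neg_eq_of_add_eq_zero_left hb]

theorem card_eq_three_of_eq_pair (ha : a + a ≠ 0) (hb : b + b = 0) (hS : S = {a, -a, b}) :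
    S.card = 3 := by
  refine hS ▸ Finset.card_eq_three.mpr
    ⟨a, -a, b, fun h => ha ?_, fun h => ha ?_, fun h => ha ?_, rfl⟩
  · nth_rw 2 [h]; exact add_neg_cancel a
  · rwa [h]
  · rw [← neg_eq_of_add_eq_zero_left hb, neg_inj] at h
    rwa [h]

theorem IsTwoFactor.cayleyGraph_adj_of_not_adj {H : SimpleGraph G}
    (hH : IsTwoFactor (cayleyGraph S) H) (h0 : (0 : G) ∉ S) (ha : a + a ≠ 0) (hb : b + b = 0)
    (hS : S = {a, -a, b}) {x s t : G} (hs : s ∈ S) (hxs : ¬ H.Adj x (x + s)) (ht : t ∈ S)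
    (hts : t ≠ s) : H.Adj x (x + t) := by
  have hsymm := neg_mem_of_eq_pair hb hS
  refine hH.adj_of_not_adj ?_ ((cayleyGraph_adj_add h0 hsymm).mpr hs) hxs
    ((cayleyGraph_adj_add h0 hsymm).mpr ht) (fun h => hts (add_left_cancel h))
  rw [cayleyGraph_ncard_neighborSet h0 hsymm, card_eq_three_of_eq_pair ha hb hS]

/-- Any 2-factor avoiding the edge `0 — a` contains the path `0 — -a — a`, since `a + a = -a`. -/
theorem not_spanningCyclable_of_addOrderOf_eq_three (h0 : (0 : G) ∉ S) (hb : b + b = 0)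
    (hS : S = {a, -a, b}) (ha3 : addOrderOf a = 3) : ¬ SpanningCyclable (cayleyGraph S) 2 := by
  have haS : a ∈ S := by simp [hS]
  have ha0 : a ≠ 0 := fun h => h0 (h ▸ haS)
  have h3a : a + a + a = 0 := by
    have := addOrderOf_nsmul_eq_zero a
    rwa [ha3, succ_nsmul, two_nsmul] at this
  have ha : a + a ≠ 0 := fun h => ha0 (by simpa [h] using h3a)
  have hna : -a ≠ a := fun h => ha (by nth_rw 1 [← h]; exact neg_add_cancel a)
  intro hsc
  obtain ⟨H, hH, hsep⟩ := hsc {0, a} (Finset.card_pair ha0.symm)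
  refine hsep.not_reachable ha0.symm ?_
  by_cases h : H.Adj 0 a
  · exact h.reachable
  have h₁ : H.Adj 0 (0 + -a) :=
    hH.cayleyGraph_adj_of_not_adj h0 ha hb hS haS (by simpa using h) (by simp [hS]) hna
  have h₂ : H.Adj a (a + a) :=
    hH.cayleyGraph_adj_of_not_adj h0 ha hb hS (by simp [hS] : -a ∈ S)
      (by simpa using fun h' => h h'.symm) haS hna.symm
  have : a + a = 0 + -a := by rw [zero_add, eq_neg_iff_add_eq_zero, h3a]
  rw [this] at h₂
  exact h₁.reachable.trans h₂.reachable.symm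

/-- If `b ∈ ⟨a⟩ = G`, every 2-factor joins `0` to `b`: without `b`-edges it contains all the
`a`-edges, and otherwise one `b`-edge propagates backwards along the `a`-direction. -/
theorem not_spanningCyclable_of_mem_zmultiples [Finite G] (h0 : (0 : G) ∉ S) (ha : a + a ≠ 0)
    (hb : b + b = 0) (hS : S = {a, -a, b}) (hclos : AddSubgroup.closure (S : Set G) = ⊤)
    (hba : b ∈ AddSubgroup.zmultiples a) : ¬ SpanningCyclable (cayleyGraph S) 2 := by
  have haS : a ∈ S := by simp [hS]
  have hbS : b ∈ S := by simp [hS]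
  have hb0 : b ≠ 0 := fun h => h0 (h ▸ hbS)
  have hab : a ≠ b := fun h => ha (h ▸ hb)
  have hmult : ∀ g : G, ∃ k : ℕ, k • a = g := by
    have hle : AddSubgroup.closure (S : Set G) ≤ AddSubgroup.zmultiples a := by
      rw [AddSubgroup.closure_le, hS]
      simp [Set.insert_subset_iff, hba, AddSubgroup.mem_zmultiples]
    exact fun g => (AddSubmonoid.mem_multiples_iff _ _).mp
      (mem_multiples_iff_mem_zmultiples.mpr (hle (hclos ▸ AddSubgroup.mem_top g)))
  intro hsc
  obtain ⟨H, hH, hsep⟩ := hsc {0, b} (Finset.card_pair hb0.symm)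
  refine hsep.not_reachable hb0.symm ?_
  have hrail : ∀ x, ¬ H.Adj x (x + b) → H.Adj x (x + a) := fun x hx =>
    hH.cayleyGraph_adj_of_not_adj h0 ha hb hS hbS hx haS hab
  by_cases hrung : ∃ w, H.Adj w (w + b)
  · obtain ⟨w, hw⟩ := hrung
    have hstep : ∀ x, H.Reachable (x + a) (x + a + b) → H.Reachable x (x + b) := by
      intro x hx
      by_cases hxb : H.Adj x (x + b)
      · exact hxb.reachable
      have hxb' : ¬ H.Adj (x + b) (x + b + b) := by rwa [add_assoc, hb, add_zero, adj_comm]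
      have h₂ := hrail (x + b) hxb'
      rw [add_right_comm] at h₂
      exact (hrail x hxb).reachable.trans (hx.trans h₂.reachable.symm)
    have hall : ∀ k : ℕ, H.Reachable (w - k • a) (w - k • a + b) := by
      intro k
      induction k with
      | zero => simpa using hw.reachable
      | succ k ih =>
        refine hstep _ ?_
        rwa [succ_nsmul, sub_add_eq_sub_sub, sub_add_cancel]
    obtain ⟨k, hk⟩ := hmult w
    simpa [hk] using hall k
  · push Not at hrung
    have hall : ∀ k : ℕ, H.Reachable 0 (k • a) := by
      intro k
      induction k with
      | zero => simp
      | succ k ih => simpa [succ_nsmul] using ih.trans (hrail _ (hrung _)).reachable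
    obtain ⟨k, hk⟩ := hmult b
    exact hk ▸ hall k

theorem nonempty_cayleyGraph_iso_prism (hb : b + b = 0) (hS : S = {a, -a, b})
    (hclos : AddSubgroup.closure (S : Set G) = ⊤) (hba : b ∉ AddSubgroup.zmultiples a) :
    Nonempty (cayleyGraph S ≃g prism (addOrderOf a)) := by
  set ψ := pairHom a hb
  have hψ10 : ψ (1, 0) = b := by simpa using pairHom_intCast a hb 1 0
  have hψ01 : ψ (0, 1) = a := by simpa using pairHom_intCast a hb 0 1
  have hψ0m1 : ψ (0, -1) = -a := by simpa using pairHom_intCast a hb 0 (-1)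
  have hinj := pairHom_injective a hb hba
  have hsurj : Function.Surjective ψ := ψ.surjective_of_closure_eq_top hclos (by
    simp only [hS, Finset.coe_insert, Finset.coe_singleton, Set.insert_subset_iff,
      Set.singleton_subset_iff]
    exact ⟨⟨_, hψ01⟩, ⟨_, hψ0m1⟩, ⟨_, hψ10⟩⟩)
  set e := AddEquiv.ofBijective ψ ⟨hinj, hsurj⟩
  have he : ∀ x, e x ∈ S ↔ x ∈ ({(1, 0), (0, 1), (0, -1)} : Finset (ZMod 2 × ZMod _)) := by
    intro x
    have hval : ∀ y, ψ x = ψ y ↔ x = y := fun y => hinj.eq_iff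
    simp only [hS, Finset.mem_insert, Finset.mem_singleton, show e x = ψ x from rfl]
    rw [← hval, ← hval, ← hval, hψ10, hψ01, hψ0m1]
    tauto
  exact ⟨(cayleyGraphIso e he).symm.trans (prismIsoCayleyGraph _).symm⟩

theorem exists_iso_prism_of_spanningCyclable [Finite G] (h0 : (0 : G) ∉ S) (ha : a + a ≠ 0)
    (hb : b + b = 0) (hS : S = {a, -a, b}) (hclos : AddSubgroup.closure (S : Set G) = ⊤)
    (hsc : SpanningCyclable (cayleyGraph S) 2) :
    ∃ n, 4 ≤ n ∧ Nonempty (cayleyGraph S ≃g prism n) := by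
  have hba : b ∉ AddSubgroup.zmultiples a := fun h =>
    not_spanningCyclable_of_mem_zmultiples h0 ha hb hS hclos h hsc
  refine ⟨addOrderOf a, ?_, nonempty_cayleyGraph_iso_prism hb hS hclos hba⟩
  have hpos : 0 < addOrderOf a := addOrderOf_pos a
  have h1 : addOrderOf a ≠ 1 := fun h =>
    h0 (AddMonoid.addOrderOf_eq_one_iff.mp h ▸ (by simp [hS] : a ∈ S))
  have h2 : addOrderOf a ≠ 2 := fun h => ha (by rw [← two_nsmul, ← h, addOrderOf_nsmul_eq_zero])
  have h3 : addOrderOf a ≠ 3 := fun h =>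
    not_spanningCyclable_of_addOrderOf_eq_three h0 hb hS h hsc
  omega

end Pair

/-- A connected 3-valent Cayley graph on a finite abelian group is
2-spanning cyclable iff it is isomorphic to `Q_3` or to `K_2 □ C_n` with `n ≥ 4`. -/
theorem statement_2 {G : Type*} [AddCommGroup G] [Fintype G] [DecidableEq G]
    (S : Finset G) (h0 : (0 : G) ∉ S) (hsymm : ∀ s ∈ S, -s ∈ S) (hcard : S.card = 3)
    (hconn : (cayleyGraph S).Connected) :
    SpanningCyclable (cayleyGraph S) 2 ↔
      (Nonempty (cayleyGraph S ≃g hypercube 3) ∨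
        ∃ n : ℕ, 4 ≤ n ∧
          Nonempty (cayleyGraph S ≃g ((⊤ : SimpleGraph (Fin 2)) □ cycleZMod n))) := by
  have hclos := closure_eq_top_of_connected hconn
  constructor
  · intro hsc
    rcases forall_add_self_eq_zero_or_exists_eq_pair hsymm hcard with hinv | ⟨a, b, ha, hb, hS⟩
    · obtain ⟨x, y, z, -, -, -, hS⟩ := Finset.card_eq_three.mp hcard
      have h6 := hsc.six_le_card (by have := S.card_le_univ; omega)
      refine Or.inl (nonempty_cayleyGraph_iso_hypercube ![x, y, z] ?_ ?_ hclos (by omega))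
      · intro i
        fin_cases i <;> exact hinv _ (by simp [hS])
      · intro s
        simp [hS, Fin.exists_fin_succ, eq_comm]
    · exact Or.inr (exists_iso_prism_of_spanningCyclable h0 ha hb hS hclos hsc)
  · rintro (⟨⟨e⟩⟩ | ⟨n, hn, ⟨e⟩⟩)
    · exact hypercube_three_spanningCyclable.of_iso e
    · exact (prism_spanningCyclable hn).of_iso e
end

section
/- For every n ≥ 4, the Cartesian product K_2 □ C_n is 2-spanning cyclable. -/
open SimpleGraph

section Generic

variable {V : Type*}

lemma color_const {H : SimpleGraph V} {f : V → Bool}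
    (hadj : ∀ u v, H.Adj u v → f u = f v) {u v : V} (h : H.Reachable u v) : f u = f v := by
  obtain ⟨w⟩ := h
  induction w with
  | nil => rfl
  | cons h _ ih => exact (hadj _ _ h).trans ih

lemma sep_of_color [DecidableEq V] {H : SimpleGraph V} {f : V → Bool}
    (hadj : ∀ u v, H.Adj u v → f u = f v)
    (hcon : ∀ u v, f u = f v → H.Reachable u v)
    {a b : V} (hf : f a ≠ f b) : SeparatesSet H {a, b} := by
  intro C
  obtain ⟨v, rfl⟩ := C.exists_rep
  by_cases hfa : f a = f v
  · refine ⟨a, ⟨by simp, ConnectedComponent.sound (hcon _ _ hfa)⟩, ?_⟩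
    rintro x ⟨hx, hxc⟩
    have hr : f x = f v := color_const hadj (ConnectedComponent.exact hxc)
    simp only [Finset.mem_insert, Finset.mem_singleton] at hx
    rcases hx with rfl | rfl
    · rfl
    · exact absurd (hr.trans hfa.symm).symm hf
  · have hfb : f b = f v := by
      cases hA : f a <;> cases hB : f b <;> cases hV : f v <;> simp_all
    refine ⟨b, ⟨by simp, ConnectedComponent.sound (hcon _ _ hfb)⟩, ?_⟩
    rintro x ⟨hx, hxc⟩
    have hr : f x = f v := color_const hadj (ConnectedComponent.exact hxc)
    simp only [Finset.mem_insert, Finset.mem_singleton] at hx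
    rcases hx with rfl | rfl
    · exact absurd hr hfa
    · rfl

lemma reach_chain {H : SimpleGraph V} (g : ℕ → V) (k : ℕ)
    (h : ∀ j < k, H.Adj (g j) (g (j + 1))) : H.Reachable (g 0) (g k) := by
  induction k with
  | zero => exact Reachable.refl _
  | succ k ih =>
      exact (ih fun j hj => h j (hj.trans (Nat.lt_succ_self k))).trans
        (h k (Nat.lt_succ_self k)).reachable

end Generic

section Fin2

lemma fin2_other {i j : Fin 2} (h : i ≠ j) : j = 1 - i := by revert i j; decide

lemma fin2_ne (i : Fin 2) : i ≠ 1 - i := by revert i; decide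

end Fin2

section ZModFacts

variable {n : ℕ}

lemma zmod_one_ne_zero (hn : 4 ≤ n) : (1 : ZMod n) ≠ 0 := by
  haveI : Fact (1 < n) := ⟨by omega⟩
  exact one_ne_zero

lemma zmod_two_ne_zero (hn : 4 ≤ n) : (2 : ZMod n) ≠ 0 := by
  intro h
  have h2 : ((2 : ℕ) : ZMod n) = 0 := by exact_mod_cast h
  rw [ZMod.natCast_eq_zero_iff] at h2
  have := Nat.le_of_dvd (by norm_num) h2
  omega

lemma zmod_add_one_ne (hn : 4 ≤ n) (z : ZMod n) : z + 1 ≠ z := by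
  intro h
  exact zmod_one_ne_zero hn (by linear_combination h)

lemma zmod_sub_one_ne (hn : 4 ≤ n) (z : ZMod n) : z - 1 ≠ z := by
  intro h
  exact zmod_one_ne_zero hn (by linear_combination -h)

lemma zmod_pm_ne (hn : 4 ≤ n) (z : ZMod n) : z + 1 ≠ z - 1 := by
  intro h
  exact zmod_two_ne_zero hn (by linear_combination h)

lemma zmod_rep (hn : 4 ≤ n) (s z : ZMod n) :
    ∃ w : ℕ, w < n ∧ z = s + (w : ℕ) ∧ (z - s).val = w := by
  haveI : NeZero n := ⟨by omega⟩
  refine ⟨(z - s).val, ZMod.val_lt _, ?_, rfl⟩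
  rw [ZMod.natCast_rightInverse (z - s)]
  ring

lemma zmod_add_cast_add_one (s : ZMod n) (w : ℕ) :
    (s + (w : ℕ)) + 1 = s + ((w + 1 : ℕ) : ZMod n) := by push_cast; ring

lemma zmod_sub_cast (hn : 4 ≤ n) (s : ZMod n) (w : ℕ) :
    (s + (w : ℕ)) - 1 = s + ((w + n - 1 : ℕ) : ZMod n) := by
  have h : ((w + n - 1 : ℕ) : ZMod n) = (w : ZMod n) - 1 := by
    rw [Nat.cast_sub (by omega : 1 ≤ w + n)]
    push_cast
    rw [ZMod.natCast_self]
    ring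
  rw [h]; ring

lemma zmod_cast_sub_one (hn : 4 ≤ n) (d : ℕ) (hd : 1 ≤ d) (s : ZMod n) :
    (s + (d : ℕ)) - 1 = s + ((d - 1 : ℕ) : ZMod n) := by
  rw [Nat.cast_sub hd]
  push_cast
  ring

end ZModFacts

section BandDef

def bandP (n : ℕ) (s : ZMod n) (d : ℕ) (z : ZMod n) : Prop := (z - s).val < d

instance (n : ℕ) (s : ZMod n) (d : ℕ) (z : ZMod n) : Decidable (bandP n s d z) :=
  inferInstanceAs (Decidable (_ < _))

variable {n : ℕ}

lemma bandP_iff (hn : 4 ≤ n) (s : ZMod n) (d m : ℕ) :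
    bandP n s d (s + (m : ℕ)) ↔ m % n < d := by
  haveI : NeZero n := ⟨by omega⟩
  unfold bandP
  rw [add_sub_cancel_left, ← ZMod.natCast_mod m n,
    ZMod.val_cast_of_lt (Nat.mod_lt _ (by omega))]

/-- an arc of length 1 is impossible: not both neighbours change colour -/
lemma no_singleton (hn : 4 ≤ n) (s : ZMod n) {d : ℕ} (hd2 : 2 ≤ d) (hdn : d + 2 ≤ n)
    (z : ZMod n) :
    (bandP n s d (z - 1) ↔ bandP n s d z) ∨ (bandP n s d z ↔ bandP n s d (z + 1)) := by
  obtain ⟨w, hw, rfl, -⟩ := zmod_rep hn s z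
  rw [zmod_add_cast_add_one, zmod_sub_cast hn, bandP_iff hn, bandP_iff hn, bandP_iff hn]
  have e0 : w % n = w := Nat.mod_eq_of_lt hw
  have e1 : (w + 1) % n = if w + 1 = n then 0 else w + 1 := by
    split
    · simp [*, Nat.mod_self]
    · exact Nat.mod_eq_of_lt (by omega)
  have e2 : (w + n - 1) % n = if w = 0 then n - 1 else w - 1 := by
    split
    · subst ‹w = 0›
      simp [Nat.mod_eq_of_lt (by omega : n - 1 < n)]
    · have h : w + n - 1 = (w - 1) + n := by omega
      rw [h, Nat.add_mod_right, Nat.mod_eq_of_lt (by omega)]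
  rw [e0, e1, e2]
  split_ifs <;> omega

end BandDef
section Graphs

variable {n : ℕ}

def rowRel (n : ℕ) (u v : Fin 2 × ZMod n) : Prop := u.1 = v.1 ∧ v.2 = u.2 + 1

def rowG (n : ℕ) : SimpleGraph (Fin 2 × ZMod n) := fromRel (rowRel n)

def bandRel (n : ℕ) (s : ZMod n) (d : ℕ) (u v : Fin 2 × ZMod n) : Prop :=
  (u.1 = v.1 ∧ v.2 = u.2 + 1 ∧ (bandP n s d u.2 ↔ bandP n s d v.2)) ∨
  (u.2 = v.2 ∧ u.1 ≠ v.1 ∧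
    (¬(bandP n s d u.2 ↔ bandP n s d (u.2 + 1)) ∨ ¬(bandP n s d (u.2 - 1) ↔ bandP n s d u.2)))

def bandG (n : ℕ) (s : ZMod n) (d : ℕ) : SimpleGraph (Fin 2 × ZMod n) := fromRel (bandRel n s d)

lemma rowG_adj (hn : 4 ≤ n) (i : Fin 2) (z : ZMod n) (u : Fin 2 × ZMod n) :
    (rowG n).Adj (i, z) u ↔ u = (i, z + 1) ∨ u = (i, z - 1) := by
  rw [rowG, fromRel_adj]
  constructor
  · rintro ⟨hne, ⟨h1, h2⟩ | ⟨h1, h2⟩⟩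
    · exact Or.inl (Prod.ext_iff.mpr ⟨h1.symm, h2⟩)
    · exact Or.inr (Prod.ext_iff.mpr ⟨h1, eq_sub_of_add_eq h2.symm⟩)
  · rintro (rfl | rfl)
    · exact ⟨fun he => zmod_add_one_ne hn z (congrArg Prod.snd he).symm,
        Or.inl ⟨rfl, rfl⟩⟩
    · exact ⟨fun he => zmod_sub_one_ne hn z (congrArg Prod.snd he).symm,
        Or.inr ⟨rfl, by ring⟩⟩

lemma bandG_adj (hn : 4 ≤ n) (s : ZMod n) (d : ℕ) (i : Fin 2) (z : ZMod n)
    (u : Fin 2 × ZMod n) :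
    (bandG n s d).Adj (i, z) u ↔
      (u = (i, z + 1) ∧ (bandP n s d z ↔ bandP n s d (z + 1))) ∨
      (u = (i, z - 1) ∧ (bandP n s d (z - 1) ↔ bandP n s d z)) ∨
      (u = (1 - i, z) ∧
        (¬(bandP n s d z ↔ bandP n s d (z + 1)) ∨ ¬(bandP n s d (z - 1) ↔ bandP n s d z))) := by
  rw [bandG, fromRel_adj]
  constructor
  · rintro ⟨hne, h | h⟩
    · rcases h with ⟨h1, h2, h3⟩ | ⟨h1, h2, h3⟩
      · exact Or.inl ⟨Prod.ext_iff.mpr ⟨h1.symm, h2⟩, h2 ▸ h3⟩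
      · exact Or.inr (Or.inr ⟨Prod.ext_iff.mpr ⟨fin2_other h2, h1.symm⟩, h3⟩)
    · rcases h with ⟨h1, h2, h3⟩ | ⟨h1, h2, h3⟩
      · have hu2 : u.2 = z - 1 := eq_sub_of_add_eq h2.symm
        exact Or.inr (Or.inl ⟨Prod.ext_iff.mpr ⟨h1, hu2⟩, hu2 ▸ h3⟩)
      · rw [h1] at h3
        exact Or.inr (Or.inr ⟨Prod.ext_iff.mpr ⟨fin2_other (Ne.symm h2), h1⟩, h3⟩)
  · rintro (⟨rfl, h⟩ | ⟨rfl, h⟩ | ⟨rfl, h⟩)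
    · exact ⟨fun he => zmod_add_one_ne hn z (congrArg Prod.snd he).symm,
        Or.inl (Or.inl ⟨rfl, rfl, h⟩)⟩
    · exact ⟨fun he => zmod_sub_one_ne hn z (congrArg Prod.snd he).symm,
        Or.inr (Or.inl ⟨rfl, by ring, h⟩)⟩
    · exact ⟨fun he => fin2_ne i (congrArg Prod.fst he),
        Or.inl (Or.inr ⟨rfl, fin2_ne i, h⟩)⟩

end Graphs
section Sub

variable {n : ℕ}

lemma box_horiz (hn : 4 ≤ n) (i : Fin 2) (z : ZMod n) :
    ((⊤ : SimpleGraph (Fin 2)) □ cycleZMod n).Adj (i, z) (i, z + 1) := by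
  rw [boxProd_adj]
  refine Or.inr ⟨?_, rfl⟩
  simp only [cycleZMod, circulantGraph, fromRel_adj]
  refine ⟨fun h => zmod_add_one_ne hn z h.symm, Or.inr ?_⟩
  have h1 : z + 1 - z = 1 := by ring
  rw [h1]
  simp

lemma box_rung (i j : Fin 2) (hij : i ≠ j) (z : ZMod n) :
    ((⊤ : SimpleGraph (Fin 2)) □ cycleZMod n).Adj (i, z) (j, z) := by
  rw [boxProd_adj]
  exact Or.inl ⟨hij, rfl⟩

lemma rowG_le (hn : 4 ≤ n) : rowG n ≤ (⊤ : SimpleGraph (Fin 2)) □ cycleZMod n := by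
  intro u v h
  rw [rowG, fromRel_adj] at h
  obtain ⟨-, ⟨h1, h2⟩ | ⟨h1, h2⟩⟩ := h
  · have hv : v = (u.1, u.2 + 1) := Prod.ext_iff.mpr ⟨h1.symm, h2⟩
    exact hv ▸ box_horiz hn u.1 u.2
  · have hu : u = (v.1, v.2 + 1) := Prod.ext_iff.mpr ⟨h1.symm, h2⟩
    exact (hu ▸ box_horiz hn v.1 v.2).symm

lemma bandG_le (hn : 4 ≤ n) (s : ZMod n) (d : ℕ) :
    bandG n s d ≤ (⊤ : SimpleGraph (Fin 2)) □ cycleZMod n := by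
  intro u v h
  rw [bandG, fromRel_adj] at h
  obtain ⟨-, h | h⟩ := h
  · rcases h with ⟨h1, h2, -⟩ | ⟨h1, h2, -⟩
    · have hv : v = (u.1, u.2 + 1) := Prod.ext_iff.mpr ⟨h1.symm, h2⟩
      exact hv ▸ box_horiz hn u.1 u.2
    · have hv : v = (v.1, u.2) := Prod.ext_iff.mpr ⟨rfl, h1.symm⟩
      exact hv ▸ box_rung u.1 v.1 h2 u.2
  · rcases h with ⟨h1, h2, -⟩ | ⟨h1, h2, -⟩
    · have hu : u = (v.1, v.2 + 1) := Prod.ext_iff.mpr ⟨h1.symm, h2⟩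
      exact (hu ▸ box_horiz hn v.1 v.2).symm
    · have hv : v = (v.1, u.2) := Prod.ext_iff.mpr ⟨rfl, h1⟩
      exact hv ▸ box_rung u.1 v.1 (Ne.symm h2) u.2

end Sub

section Deg

variable {n : ℕ}

lemma rowG_deg (hn : 4 ≤ n) (v : Fin 2 × ZMod n) :
    ((rowG n).neighborSet v).ncard = 2 := by
  obtain ⟨i, z⟩ := v
  have hset : (rowG n).neighborSet (i, z) = {(i, z + 1), (i, z - 1)} := by
    ext u
    rw [mem_neighborSet, rowG_adj hn]
    simp
  rw [hset]
  exact Set.ncard_pair fun h => zmod_pm_ne hn z (congrArg Prod.snd h)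

lemma bandG_deg (hn : 4 ≤ n) (s : ZMod n) {d : ℕ} (hd2 : 2 ≤ d) (hdn : d + 2 ≤ n)
    (v : Fin 2 × ZMod n) : ((bandG n s d).neighborSet v).ncard = 2 := by
  obtain ⟨i, z⟩ := v
  by_cases hl : (bandP n s d (z - 1) ↔ bandP n s d z) <;>
    by_cases hr : (bandP n s d z ↔ bandP n s d (z + 1))
  · have hset : (bandG n s d).neighborSet (i, z) = {(i, z + 1), (i, z - 1)} := by
      ext u
      rw [mem_neighborSet, bandG_adj hn]
      simp [hl, hr]
    rw [hset]
    exact Set.ncard_pair fun h => zmod_pm_ne hn z (congrArg Prod.snd h)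
  · have hset : (bandG n s d).neighborSet (i, z) = {(i, z - 1), (1 - i, z)} := by
      ext u
      rw [mem_neighborSet, bandG_adj hn]
      simp [hl, hr]
    rw [hset]
    exact Set.ncard_pair fun h => fin2_ne i (congrArg Prod.fst h)
  · have hl' : ¬(bandP n s d (z - 1) ↔ bandP n s d (z + 1)) := fun h => hl (h.trans hr.symm)
    have hset : (bandG n s d).neighborSet (i, z) = {(i, z + 1), (1 - i, z)} := by
      ext u
      rw [mem_neighborSet, bandG_adj hn]
      simp [hl', hr]
    rw [hset]
    exact Set.ncard_pair fun h => fin2_ne i (congrArg Prod.fst h)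
  · rcases no_singleton hn s hd2 hdn z with h | h <;> contradiction

end Deg
section Conn

variable {n : ℕ}

lemma rowG_reach (hn : 4 ≤ n) (i : Fin 2) (x y : ZMod n) :
    (rowG n).Reachable (i, x) (i, y) := by
  obtain ⟨w, hw, rfl, -⟩ := zmod_rep hn x y
  have h := reach_chain (H := rowG n) (fun j => (i, x + (j : ℕ))) w ?_
  · simpa using h
  · intro j hj
    rw [rowG_adj hn]
    exact Or.inl (Prod.ext_iff.mpr ⟨rfl, by push_cast; ring⟩)

lemma fin2_zero_or_one (i : Fin 2) : i = 0 ∨ i = 1 := by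
  fin_cases i
  · exact Or.inl rfl
  · exact Or.inr rfl

lemma bandP_at (hn : 4 ≤ n) (s : ZMod n) (d m : ℕ) (hm : m < n) :
    bandP n s d (s + (m : ℕ)) ↔ m < d := by
  rw [bandP_iff hn, Nat.mod_eq_of_lt hm]

lemma bandG_rung_in (hn : 4 ≤ n) (s : ZMod n) {d : ℕ} (hd2 : 2 ≤ d) (hdn : d + 2 ≤ n) :
    (bandG n s d).Adj (1, s) (0, s) := by
  rw [bandG_adj hn]
  refine Or.inr (Or.inr ⟨rfl, Or.inr ?_⟩)
  have h1 : bandP n s d s := by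
    have h0 := bandP_at hn s d 0 (by omega)
    simp only [Nat.cast_zero, add_zero] at h0
    exact h0.mpr (by omega)
  have h2 : ¬ bandP n s d (s - 1) := by
    have he : s - 1 = s + ((0 + n - 1 : ℕ) : ZMod n) := by
      have h := zmod_sub_cast hn s 0
      simpa using h
    rw [he, bandP_at hn s d _ (by omega)]
    omega
  tauto

lemma bandG_rung_out (hn : 4 ≤ n) (s : ZMod n) {d : ℕ} (hd2 : 2 ≤ d) (hdn : d + 2 ≤ n) :
    (bandG n s d).Adj (1, s + (d : ℕ)) (0, s + (d : ℕ)) := by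
  rw [bandG_adj hn]
  refine Or.inr (Or.inr ⟨rfl, Or.inr ?_⟩)
  have h1 : ¬ bandP n s d (s + (d : ℕ)) := by
    rw [bandP_at hn s d d (by omega)]
    omega
  have h2 : bandP n s d (s + (d : ℕ) - 1) := by
    rw [zmod_cast_sub_one hn d (by omega) s, bandP_at hn s d _ (by omega)]
    omega
  tauto

lemma bandG_reach_in (hn : 4 ≤ n) (s : ZMod n) {d : ℕ} (hd2 : 2 ≤ d) (hdn : d + 2 ≤ n)
    (i : Fin 2) (m : ℕ) (hm : m < d) :
    (bandG n s d).Reachable (i, s + (m : ℕ)) (0, s) := by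
  have hchain : (bandG n s d).Reachable (i, s) (i, s + (m : ℕ)) := by
    have h := reach_chain (H := bandG n s d) (fun j => (i, s + (j : ℕ))) m ?_
    · simpa using h
    · intro j hj
      rw [bandG_adj hn]
      refine Or.inl ⟨Prod.ext_iff.mpr ⟨rfl, by push_cast; ring⟩, ?_⟩
      rw [zmod_add_cast_add_one, bandP_at hn s d j (by omega), bandP_at hn s d (j + 1) (by omega)]
      omega
  rcases fin2_zero_or_one i with rfl | rfl
  · exact hchain.symm
  · exact hchain.symm.trans (bandG_rung_in hn s hd2 hdn).reachable

lemma bandG_reach_out (hn : 4 ≤ n) (s : ZMod n) {d : ℕ} (hd2 : 2 ≤ d) (hdn : d + 2 ≤ n)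
    (i : Fin 2) (m : ℕ) (hm : m < n - d) :
    (bandG n s d).Reachable (i, s + ((d + m : ℕ) : ZMod n)) (0, s + (d : ℕ)) := by
  have hchain : (bandG n s d).Reachable (i, s + (d : ℕ)) (i, s + ((d + m : ℕ) : ZMod n)) := by
    have h := reach_chain (H := bandG n s d) (fun j => (i, s + ((d + j : ℕ) : ZMod n))) m ?_
    · simpa using h
    · intro j hj
      rw [bandG_adj hn]
      refine Or.inl ⟨Prod.ext_iff.mpr ⟨rfl, by push_cast; ring⟩, ?_⟩
      rw [zmod_add_cast_add_one, bandP_at hn s d (d + j) (by omega),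
        bandP_at hn s d (d + j + 1) (by omega)]
      omega
  rcases fin2_zero_or_one i with rfl | rfl
  · exact hchain.symm
  · exact hchain.symm.trans (bandG_rung_out hn s hd2 hdn).reachable

lemma bandG_conn (hn : 4 ≤ n) (s : ZMod n) {d : ℕ} (hd2 : 2 ≤ d) (hdn : d + 2 ≤ n)
    (u v : Fin 2 × ZMod n) (hc : bandP n s d u.2 ↔ bandP n s d v.2) :
    (bandG n s d).Reachable u v := by
  have key : ∀ (i : Fin 2) (z : ZMod n),
      (bandP n s d z → (bandG n s d).Reachable (i, z) (0, s)) ∧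
      (¬ bandP n s d z → (bandG n s d).Reachable (i, z) (0, s + (d : ℕ))) := by
    intro i z
    obtain ⟨w, hw, rfl, -⟩ := zmod_rep hn s z
    have hPiff := bandP_at hn s d w hw
    constructor
    · intro hP
      exact bandG_reach_in hn s hd2 hdn i w (hPiff.mp hP)
    · intro hP
      have hge : d ≤ w := by
        by_contra hcon
        exact hP (hPiff.mpr (by omega))
      have hrw : (i, s + ((w : ℕ) : ZMod n)) = (i, s + ((d + (w - d) : ℕ) : ZMod n)) := by
        have : d + (w - d) = w := by omega
        rw [this]
      rw [hrw]
      exact bandG_reach_out hn s hd2 hdn i (w - d) (by omega)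
  obtain ⟨iu, zu⟩ := u
  obtain ⟨iv, zv⟩ := v
  simp only at hc
  by_cases hP : bandP n s d zu
  · exact ((key iu zu).1 hP).trans ((key iv zv).1 (hc.mp hP)).symm
  · exact ((key iu zu).2 hP).trans ((key iv zv).2 (fun h => hP (hc.mpr h))).symm

end Conn
section Main

variable {n : ℕ}

lemma row_main (hn : 4 ≤ n) {a b : Fin 2 × ZMod n} (hab : a.1 ≠ b.1) :
    ∃ H, IsTwoFactor ((⊤ : SimpleGraph (Fin 2)) □ cycleZMod n) H ∧ SeparatesSet H {a, b} := by
  refine ⟨rowG n, ⟨rowG_le hn, rowG_deg hn⟩, ?_⟩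
  apply sep_of_color (f := fun p => decide (p.1 = 0))
  · intro u v h
    rw [rowG, fromRel_adj] at h
    obtain ⟨-, ⟨h1, -⟩ | ⟨h1, -⟩⟩ := h
    · rw [h1]
    · rw [h1]
  · intro u v h
    simp only [decide_eq_decide] at h
    have h1 : u.1 = v.1 := by
      rcases fin2_zero_or_one u.1 with h2 | h2 <;> rcases fin2_zero_or_one v.1 with h3 | h3 <;>
        rw [h2, h3] <;> simp [h2, h3] at h <;> rfl
    obtain ⟨iu, zu⟩ := u
    obtain ⟨iv, zv⟩ := v
    simp only at h1
    subst h1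
    exact rowG_reach hn iu zu zv
  · simp only [Ne, decide_eq_decide]
    rcases fin2_zero_or_one a.1 with h2 | h2 <;> rcases fin2_zero_or_one b.1 with h3 | h3 <;>
      rw [h2, h3] at hab ⊢ <;> simp_all

lemma band_main (hn : 4 ≤ n) (s : ZMod n) {d : ℕ} (hd2 : 2 ≤ d) (hdn : d + 2 ≤ n)
    {a b : Fin 2 × ZMod n} (hP : bandP n s d a.2) (hnP : ¬ bandP n s d b.2) :
    ∃ H, IsTwoFactor ((⊤ : SimpleGraph (Fin 2)) □ cycleZMod n) H ∧ SeparatesSet H {a, b} := by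
  refine ⟨bandG n s d, ⟨bandG_le hn s d, bandG_deg hn s hd2 hdn⟩, ?_⟩
  apply sep_of_color (f := fun p => decide (bandP n s d p.2))
  · intro u v h
    rw [bandG, fromRel_adj] at h
    simp only [decide_eq_decide]
    obtain ⟨-, h | h⟩ := h
    · rcases h with ⟨-, -, h3⟩ | ⟨h1, -, -⟩
      · exact h3
      · rw [h1]
    · rcases h with ⟨-, -, h3⟩ | ⟨h1, -, -⟩
      · exact h3.symm
      · rw [h1]
  · intro u v h
    rw [decide_eq_decide] at h
    exact bandG_conn hn s hd2 hdn u v h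
  · simp [hP, hnP]

end Main

/-- For every `n ≥ 4`, the Cartesian product `K_2 □ C_n` is 2-spanning cyclable. -/
theorem statement_3 (n : ℕ) (hn : 4 ≤ n) :
    SpanningCyclable ((⊤ : SimpleGraph (Fin 2)) □ cycleZMod n) 2 := by
  haveI : NeZero n := ⟨by omega⟩
  haveI : Fact (1 < n) := ⟨by omega⟩
  intro A hA
  obtain ⟨a, b, hab, rfl⟩ := Finset.card_eq_two.mp hA
  by_cases h1 : a.1 = b.1
  · have h2 : a.2 ≠ b.2 := fun h => hab (Prod.ext_iff.mpr ⟨h1, h⟩)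
    obtain ⟨w, hw, hb2, hval⟩ := zmod_rep hn a.2 b.2
    have hw0 : w ≠ 0 := by
      rintro rfl
      simp at hb2
      exact h2 hb2.symm
    by_cases hw1 : w = 1
    · have hPa : bandP n (a.2 - 1) 2 a.2 := by
        show (a.2 - (a.2 - 1)).val < 2
        have he : a.2 - (a.2 - 1) = 1 := by ring
        rw [he, ZMod.val_one]
        omega
      have hPb : ¬ bandP n (a.2 - 1) 2 b.2 := by
        show ¬ (b.2 - (a.2 - 1)).val < 2
        have he : b.2 - (a.2 - 1) = ((2 : ℕ) : ZMod n) := by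
          rw [hb2, hw1]
          push_cast
          ring
        rw [he, ZMod.val_cast_of_lt (by omega)]
        omega
      exact band_main hn (a.2 - 1) (le_refl 2) (by omega) hPa hPb
    · by_cases hwn : w = n - 1
      · have hPa : bandP n a.2 2 a.2 := by
          show (a.2 - a.2).val < 2
          rw [sub_self, ZMod.val_zero]
          omega
        have hPb : ¬ bandP n a.2 2 b.2 := by
          show ¬ (b.2 - a.2).val < 2
          rw [hval]
          omega
        exact band_main hn a.2 (le_refl 2) (by omega) hPa hPb
      · have hPa : bandP n a.2 w a.2 := by
          show (a.2 - a.2).val < w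
          rw [sub_self, ZMod.val_zero]
          omega
        have hPb : ¬ bandP n a.2 w b.2 := by
          show ¬ (b.2 - a.2).val < w
          rw [hval]
          omega
        exact band_main hn a.2 (by omega) (by omega) hPa hPb
  · exact row_main hn h1
end

section
/- Let n ≥ 6 be even and let Y be the circulant graph with vertex set Z/nZ in which distinct vertices x and y are adjacent if and only if x − y ∈ {1, −1, n/2} (mod n). Then Y has no 2-factor consisting of two cycles that separates the pair {0, n/2}; in particular, Y is not 2-spanning cyclable. -/
open SimpleGraph

private lemma key_lemma (n : ℕ) (hn : 6 ≤ n) (heven : Even n) (H : SimpleGraph (ZMod n))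
    (hle : H ≤ circulantGraph ({1, -1, ((n / 2 : ℕ) : ZMod n)} : Set (ZMod n)))
    (hdeg : ∀ v : ZMod n, (H.neighborSet v).ncard = 2) (x : ZMod n) :
    H.Reachable x (x + ((n / 2 : ℕ) : ZMod n)) := by
  haveI : NeZero n := ⟨by omega⟩
  set M : ZMod n := ((n / 2 : ℕ) : ZMod n) with hMdef
  have hne : ∀ a b : ℕ, a < n → b < n → a ≠ b → ((a : ZMod n) ≠ (b : ZMod n)) := by
    intro a b ha hb hab h
    have := (ZMod.natCast_eq_natCast_iff' a b n).mp h
    rw [Nat.mod_eq_of_lt ha, Nat.mod_eq_of_lt hb] at this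
    exact hab this
  obtain ⟨k, hk⟩ := heven
  have hMM : M + M = 0 := by
    rw [hMdef, show ((n/2:ℕ):ZMod n) + ((n/2:ℕ):ZMod n) = ((n/2 + n/2 : ℕ) : ZMod n) by push_cast; ring,
      show n/2 + n/2 = n by omega]
    exact ZMod.natCast_self n
  have hM0 : M ≠ 0 := by
    have := hne (n/2) 0 (by omega) (by omega) (by omega)
    simpa using this
  have hM1 : M ≠ 1 := by
    have := hne (n/2) 1 (by omega) (by omega) (by omega)
    simpa using this
  have hMneg : M ≠ -1 := by
    intro h
    have h' : ((n/2 + 1 : ℕ) : ZMod n) = ((0 : ℕ) : ZMod n) := by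
      push_cast
      rw [← hMdef, h]; ring
    exact hne (n/2 + 1) 0 (by omega) (by omega) (by omega) h'
  have h2ne : (2 : ZMod n) ≠ 0 := by
    have := hne 2 0 (by omega) (by omega) (by omega)
    simpa using this
  -- adjacency restriction
  have hadj : ∀ a b : ZMod n, H.Adj a b → b = a + 1 ∨ b = a - 1 ∨ b = a + M := by
    intro a b h
    have hx := hle h
    simp only [circulantGraph, fromRel_adj, Set.mem_insert_iff, Set.mem_singleton_iff] at hx
    obtain ⟨-, (h1|h1|h1)|(h1|h1|h1)⟩ := hx
    · right; left; linear_combination -h1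
    · left; linear_combination -h1
    · right; right; linear_combination -h1 - hMM
    · left; linear_combination h1
    · right; left; linear_combination h1
    · right; right; linear_combination h1
  -- pairwise distinctness of the three candidate neighbors
  have d1 : ∀ z : ZMod n, z + 1 ≠ z - 1 := fun z h => h2ne (by linear_combination h)
  have d2 : ∀ z : ZMod n, z + 1 ≠ z + M := fun z h => hM1 (by linear_combination -h)
  have d3 : ∀ z : ZMod n, z - 1 ≠ z + M := fun z h => hMneg (by linear_combination -h)
  have hsmall : ∀ (z w : ZMod n), H.neighborSet z ⊆ {w} → False := by
    intro z w hsub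
    have h := Set.ncard_le_ncard hsub (Set.toFinite _)
    rw [hdeg z, Set.ncard_singleton] at h
    omega
  -- the degree trichotomy
  have deg2 : ∀ z : ZMod n,
      (H.Adj z (z+1) ∧ H.Adj z (z-1) ∧ ¬H.Adj z (z+M)) ∨
      (H.Adj z (z+1) ∧ ¬H.Adj z (z-1) ∧ H.Adj z (z+M)) ∨
      (¬H.Adj z (z+1) ∧ H.Adj z (z-1) ∧ H.Adj z (z+M)) := by
    intro z
    by_cases hA1 : H.Adj z (z+1) <;> by_cases hA0 : H.Adj z (z-1) <;>
      by_cases hD : H.Adj z (z+M)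
    · -- all three: ncard would be 3
      exfalso
      have hNe : H.neighborSet z = {z+1, z-1, z+M} := by
        ext y
        simp only [mem_neighborSet, Set.mem_insert_iff, Set.mem_singleton_iff]
        constructor
        · exact hadj z y
        · rintro (rfl|rfl|rfl) <;> assumption
      have h := hdeg z
      rw [hNe, Set.ncard_insert_of_notMem (by simp [d1 z, d2 z]) (Set.toFinite _),
        Set.ncard_pair (d3 z)] at h
      omega
    · tauto
    · tauto
    · exfalso
      refine hsmall z (z+1) ?_
      intro y hy
      rcases hadj z y hy with rfl|rfl|rfl
      · exact Set.mem_singleton _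
      · exact absurd hy hA0
      · exact absurd hy hD
    · tauto
    · exfalso
      refine hsmall z (z-1) ?_
      intro y hy
      rcases hadj z y hy with rfl|rfl|rfl
      · exact absurd hy hA1
      · exact Set.mem_singleton _
      · exact absurd hy hD
    · exfalso
      refine hsmall z (z+M) ?_
      intro y hy
      rcases hadj z y hy with rfl|rfl|rfl
      · exact absurd hy hA1
      · exact absurd hy hA0
      · exact Set.mem_singleton _
    · exfalso
      refine hsmall z (z+1) ?_
      intro y hy
      rcases hadj z y hy with rfl|rfl|rfl
      · exact absurd hy hA1
      · exact absurd hy hA0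
      · exact absurd hy hD
  -- if the rim edge to the right of y is missing, y+1 has its chord
  have hchord : ∀ y : ZMod n, ¬H.Adj y (y+1) → H.Adj (y+1) ((y+1)+M) := by
    intro y h
    have h' : ¬ H.Adj (y+1) ((y+1) - 1) := by
      rw [add_sub_cancel_right]
      exact fun hc => h hc.symm
    rcases deg2 (y+1) with ⟨-, h2, -⟩|⟨-, -, h3⟩|⟨-, h2, -⟩
    · exact absurd h2 h'
    · exact h3
    · exact absurd h2 h'
  -- the set {z : z ~ z+M} is closed under +1
  have hstep : ∀ z : ZMod n, H.Reachable z (z + M) → H.Reachable (z+1) ((z+1) + M) := by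
    intro z hz
    by_cases hA : H.Adj z (z+1)
    · by_cases hA' : H.Adj (z+M) ((z+M)+1)
      · have e : (z+M)+1 = (z+1)+M := by ring
        have h1 : H.Reachable (z+1) (z+M) := (hA.symm.reachable).trans hz
        have h2 : H.Reachable (z+M) ((z+1)+M) := by rw [← e]; exact hA'.reachable
        exact h1.trans h2
      · have hc := hchord (z+M) hA'
        have e1 : ((z+M)+1)+M = z+1 := by linear_combination hMM
        have e2 : (z+M)+1 = (z+1)+M := by ring
        rw [e1, e2] at hc
        exact hc.symm.reachable
    · exact (hchord z hA).reachable
  by_cases hex : ∃ y : ZMod n, H.Adj y (y + M)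
  · obtain ⟨y0, hy0⟩ := hex
    have hreach : ∀ j : ℕ, H.Reachable (y0 + (j : ZMod n)) (y0 + (j : ZMod n) + M) := by
      intro j
      induction j with
      | zero => simpa using hy0.reachable
      | succ j ih =>
        have e : y0 + ((j+1 : ℕ) : ZMod n) = (y0 + (j : ZMod n)) + 1 := by push_cast; ring
        rw [e]
        exact hstep _ ih
    have hv : (((x - y0).val : ℕ) : ZMod n) = x - y0 := ZMod.natCast_rightInverse _
    have h := hreach (x - y0).val
    rw [hv, show y0 + (x - y0) = x by ring] at h
    exact h
  · -- no chords at all: all rim edges are present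
    push_neg at hex
    have hall : ∀ y : ZMod n, H.Adj y (y+1) := by
      intro y
      rcases deg2 y with ⟨h1, -, -⟩|⟨h1, -, -⟩|⟨-, -, h3⟩
      · exact h1
      · exact h1
      · exact absurd h3 (hex y)
    have hreach : ∀ (a : ZMod n) (j : ℕ), H.Reachable a (a + (j : ZMod n)) := by
      intro a j
      induction j with
      | zero => simpa using Reachable.refl a
      | succ j ih =>
        have e : a + ((j+1 : ℕ) : ZMod n) = (a + (j : ZMod n)) + 1 := by push_cast; ring
        rw [e]
        exact ih.trans (hall _).reachable
    exact hreach x (n/2)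

/-- For even `n ≥ 6`, the circulant graph on `ZMod n` with connection set
`{1, -1, n/2}` has no 2-factor consisting of two cycles separating `{0, n/2}`;
in particular it is not 2-spanning cyclable. -/
theorem statement_4 (n : ℕ) (hn : 6 ≤ n) (heven : Even n) :
    (¬ ∃ H, IsTwoFactor (circulantGraph ({1, -1, ((n / 2 : ℕ) : ZMod n)} : Set (ZMod n))) H ∧
        SeparatesSet H {(0 : ZMod n), ((n / 2 : ℕ) : ZMod n)}) ∧
    ¬ SpanningCyclable (circulantGraph ({1, -1, ((n / 2 : ℕ) : ZMod n)} : Set (ZMod n))) 2 := by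
  haveI : NeZero n := ⟨by omega⟩
  have hM0 : ((n / 2 : ℕ) : ZMod n) ≠ 0 := by
    intro h
    have h' : (((n/2 : ℕ)) : ZMod n) = ((0 : ℕ) : ZMod n) := by simpa using h
    have := (ZMod.natCast_eq_natCast_iff' (n/2) 0 n).mp h'
    rw [Nat.mod_eq_of_lt (by omega), Nat.mod_eq_of_lt (by omega)] at this
    omega
  have hpart1 : ¬ ∃ H, IsTwoFactor (circulantGraph ({1, -1, ((n / 2 : ℕ) : ZMod n)} : Set (ZMod n))) H ∧
      SeparatesSet H {(0 : ZMod n), ((n / 2 : ℕ) : ZMod n)} := by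
    rintro ⟨H, ⟨hle, hdeg⟩, hsep⟩
    have hr : H.connectedComponentMk ((n / 2 : ℕ) : ZMod n) = H.connectedComponentMk 0 := by
      have h := key_lemma n hn heven H hle hdeg 0
      rw [zero_add] at h
      exact (ConnectedComponent.sound h).symm
    obtain ⟨a, -, hu⟩ := hsep (H.connectedComponentMk 0)
    have h1 := hu 0 ⟨by simp, rfl⟩
    have h2 := hu ((n / 2 : ℕ) : ZMod n) ⟨by simp, hr⟩
    exact hM0 (h2.trans h1.symm)
  refine ⟨hpart1, fun hsc => hpart1 ?_⟩
  apply hsc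
  rw [Finset.card_insert_of_notMem (by simpa using hM0.symm), Finset.card_singleton]
end

section
/- Let m, n ≥ 3 and ℓ ∈ Z/nZ. Suppose the Cartesian product C_m □ C_n has a 2-factor F consisting of three cycles that separates a set {x, y, z} of three vertices, and suppose F contains no edge joining a vertex of column m−2 to a vertex of column m−1. Then the pseudo-Cartesian product C_m □_ℓ C_n has a 2-factor consisting of three cycles that separates the set obtained from {x, y, z} by replacing each vertex u_{m−1,j} lying in column m−1 by u_{m−1,j−ℓ} and leaving all vertices not in column m−1 unchanged. -/
open SimpleGraph

/-!
Relabel the rows of the last column by `j ↦ j - ℓ`. This bijection turns every edge of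
`C_m □ C_n` into an edge of `C_m □_ℓ C_n`, except the edges between columns `m - 2` and `m - 1`
(which `F` avoids): vertical edges inside the last column stay vertical, and the wrap-around
edge `u_{m-1,j} u_{0,j}` becomes `u_{m-1,j-ℓ} u_{0,j}`, a jump-`ℓ` edge. Hence the image of `F`
is a 2-factor of `C_m □_ℓ C_n`, isomorphic to `F`, separating the image of `{x, y, z}`.
-/

section Transport

variable {V W : Type*} {F : SimpleGraph V} {F' : SimpleGraph W}

theorem SimpleGraph.Iso.ncard_neighborSet (φ : F ≃g F') (v : V) :
    (F'.neighborSet (φ v)).ncard = (F.neighborSet v).ncard := by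
  rw [← φ.image_neighborSet, Set.ncard_image_of_injective _ φ.injective]

theorem IsTwoFactor.of_iso {X : SimpleGraph V} {Y : SimpleGraph W} (hF : IsTwoFactor X F)
    (φ : F ≃g F') (hle : F' ≤ Y) : IsTwoFactor Y F' := by
  refine ⟨hle, fun w => ?_⟩
  obtain ⟨v, rfl⟩ := φ.surjective w
  rw [φ.ncard_neighborSet]
  exact hF.2 v

theorem SeparatesSet.of_iso [DecidableEq W] {A : Finset V} (hA : SeparatesSet F A)
    (φ : F ≃g F') : SeparatesSet F' (A.image φ) := by
  intro C'
  obtain ⟨C, rfl⟩ := φ.connectedComponentEquiv.surjective C'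
  obtain ⟨a, ⟨haA, haC⟩, huniq⟩ := hA C
  refine ⟨φ a, ⟨Finset.mem_image_of_mem φ haA, ?_⟩, ?_⟩
  · rw [← haC]; rfl
  · rintro _ ⟨hbA, hbC⟩
    obtain ⟨b, hb, rfl⟩ := Finset.mem_image.mp hbA
    rw [Iso.connectedComponentEquiv_apply,
      ConnectedComponent.iso_image_comp_eq_map_iff_eq_comp] at hbC
    rw [huniq b ⟨hb, hbC⟩]

end Transport

section PseudoProd

variable {m n : ℕ}

def pseudoProdArc (m n : ℕ) (l : ZMod n) (u v : Fin m × ZMod n) : Prop :=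
  (u.1 = v.1 ∧ v.2 = u.2 + 1) ∨
    ((u.1 : ℕ) + 1 = (v.1 : ℕ) ∧ u.2 = v.2) ∨
    ((u.1 : ℕ) = m - 1 ∧ (v.1 : ℕ) = 0 ∧ v.2 = u.2 + l)

theorem pseudoProd_adj {l : ZMod n} {u v : Fin m × ZMod n} :
    (pseudoProd m n l).Adj u v ↔
      u ≠ v ∧ (pseudoProdArc m n l u v ∨ pseudoProdArc m n l v u) :=
  Iff.rfl

def shiftLastColumn (m n : ℕ) (l : ZMod n) : (Fin m × ZMod n) ≃ (Fin m × ZMod n) where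
  toFun w := if (w.1 : ℕ) = m - 1 then (w.1, w.2 - l) else w
  invFun w := if (w.1 : ℕ) = m - 1 then (w.1, w.2 + l) else w
  left_inv w := by by_cases h : (w.1 : ℕ) = m - 1 <;> simp [h]
  right_inv w := by by_cases h : (w.1 : ℕ) = m - 1 <;> simp [h]

theorem shiftLastColumn_of_ne {l : ZMod n} {w : Fin m × ZMod n} (hw : (w.1 : ℕ) ≠ m - 1) :
    shiftLastColumn m n l w = w :=
  if_neg hw

theorem shiftLastColumn_of_eq {l : ZMod n} {w : Fin m × ZMod n} (hw : (w.1 : ℕ) = m - 1) :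
    shiftLastColumn m n l w = (w.1, w.2 - l) :=
  if_pos hw

theorem pseudoProdArc_shiftLastColumn (hm : 2 ≤ m) (l : ZMod n) {u v : Fin m × ZMod n}
    (huv : pseudoProdArc m n 0 u v) (hcol : ¬((u.1 : ℕ) = m - 2 ∧ (v.1 : ℕ) = m - 1)) :
    pseudoProdArc m n l (shiftLastColumn m n l u) (shiftLastColumn m n l v) := by
  rcases huv with ⟨hsame, hrow⟩ | ⟨hnext, hrow⟩ | ⟨hu, hv, hrow⟩
  · left
    by_cases hu : (u.1 : ℕ) = m - 1
    · rw [shiftLastColumn_of_eq hu, shiftLastColumn_of_eq (hsame ▸ hu)]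
      exact ⟨hsame, by rw [hrow]; ring⟩
    · rw [shiftLastColumn_of_ne hu, shiftLastColumn_of_ne (hsame ▸ hu)]
      exact ⟨hsame, hrow⟩
  · have hv := v.1.is_lt
    right; left
    rw [shiftLastColumn_of_ne (by omega), shiftLastColumn_of_ne (by omega)]
    exact ⟨hnext, hrow⟩
  · right; right
    rw [shiftLastColumn_of_eq hu, shiftLastColumn_of_ne (by omega)]
    exact ⟨hu, hv, by rw [hrow]; ring⟩

theorem map_shiftLastColumn_le (hm : 2 ≤ m) (l : ZMod n) {F : SimpleGraph (Fin m × ZMod n)}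
    (hF : F ≤ pseudoProd m n 0)
    (hcol : ∀ u v : Fin m × ZMod n, F.Adj u v → ¬((u.1 : ℕ) = m - 2 ∧ (v.1 : ℕ) = m - 1)) :
    F.map (shiftLastColumn m n l) ≤ pseudoProd m n l := by
  rintro _ _ ⟨-, u, v, huv, rfl, rfl⟩
  obtain ⟨hne, harc⟩ := pseudoProd_adj.mp (hF huv)
  refine pseudoProd_adj.mpr ⟨(shiftLastColumn m n l).injective.ne hne, ?_⟩
  exact harc.imp (pseudoProdArc_shiftLastColumn hm l · (hcol u v huv))
    (pseudoProdArc_shiftLastColumn hm l · (hcol v u huv.symm))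

end PseudoProd

theorem statement_10_general (m n : ℕ) (hm : 3 ≤ m) (l : ZMod n)
    (x y z : Fin m × ZMod n)
    (F : SimpleGraph (Fin m × ZMod n))
    (hF : IsTwoFactor (pseudoProd m n 0) F)
    (hsep : SeparatesSet F {x, y, z})
    (hedge : ∀ u v : Fin m × ZMod n, F.Adj u v →
      ¬((u.1 : ℕ) = m - 2 ∧ (v.1 : ℕ) = m - 1)) :
    ∃ H, IsTwoFactor (pseudoProd m n l) H ∧
      SeparatesSet H (({x, y, z} : Finset (Fin m × ZMod n)).image
        (fun w => if (w.1 : ℕ) = m - 1 then (w.1, w.2 - l) else w)) := by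
  let φ := Iso.map (shiftLastColumn m n l) F
  exact ⟨_, hF.of_iso φ (map_shiftLastColumn_le (by omega) l hF.1 hedge), hsep.of_iso φ⟩

/-- If `C_m □ C_n` has a 2-factor `F` of three cycles separating three
vertices `x, y, z` and `F` uses no edge between column `m-2` and column `m-1`, then
`C_m □_ℓ C_n` has a 2-factor of three cycles separating the set obtained from
`{x, y, z}` by shifting each vertex in column `m-1` by `-ℓ`. -/
theorem statement_10 (m n : ℕ) (hm : 3 ≤ m) (hn : 3 ≤ n) (l : ZMod n)
    (x y z : Fin m × ZMod n) (hxy : x ≠ y) (hxz : x ≠ z) (hyz : y ≠ z)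
    (F : SimpleGraph (Fin m × ZMod n))
    (hF : IsTwoFactor (pseudoProd m n 0) F)
    (hsep : SeparatesSet F {x, y, z})
    (hedge : ∀ u v : Fin m × ZMod n, F.Adj u v →
      ¬((u.1 : ℕ) = m - 2 ∧ (v.1 : ℕ) = m - 1)) :
    ∃ H, IsTwoFactor (pseudoProd m n l) H ∧
      SeparatesSet H (({x, y, z} : Finset (Fin m × ZMod n)).image
        (fun w => if (w.1 : ℕ) = m - 1 then (w.1, w.2 - l) else w)) :=
  statement_10_general m n hm l x y z F hF hsep hedge
end

section
/- For m ≥ 3 and ℓ ∈ Z/3Z, the pseudo-Cartesian product C_m □_ℓ C_3 is 3-spanning cyclable if and only if m ≥ 4 and ℓ = 0. -/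
open SimpleGraph

/-!
For `ℓ = 0` and `m ≥ 4` a separating 2-factor is assembled from three explicit cycles: three rows
when the chosen vertices lie in distinct rows; three "snakes", each a Hamiltonian cycle of a block
of consecutive columns, when they lie in distinct columns; otherwise two of them share a column
and the third shares a row with one of these two, and one takes the row of the remaining vertex
together with two "ladders" on the other two rows, one over two columns and one over the other
`m - 2 ≥ 2` columns. Since column translations are automorphisms when `ℓ = 0`, the blocks may
be taken to start at column `0`.

Conversely, separate the vertices of column `0`. If `ℓ ≠ 0`, no cycle can use a vertical edge,
so each row is forced to lie on the cycle of its vertex in column `0`, and the wrap-around edges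
with jump `ℓ` join two of these cycles. If `m = 3` and `ℓ = 0`, separating `(0,0)`, `(0,1)`,
`(1,0)` forces the edges at these three vertices, and `(0,1)` and `(1,0)` end up with the common
neighbour `(1,1)`.
-/

section TwoFactors

variable {V W : Type*} {X H : SimpleGraph V}

def HasSeparatingTwoFactor (X : SimpleGraph V) (A : Finset V) : Prop :=
  ∃ H : SimpleGraph V, IsTwoFactor X H ∧ SeparatesSet H A

theorem separatesSet_iff {A : Finset V} :
    SeparatesSet H A ↔
      (∀ v, ∃ a ∈ A, H.Reachable a v) ∧ ∀ a ∈ A, ∀ b ∈ A, H.Reachable a b → a = b := by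
  constructor
  · intro h
    refine ⟨fun v => ?_, fun a ha b hb hab => ?_⟩
    · obtain ⟨a, ⟨ha, hav⟩, -⟩ := h (H.connectedComponentMk v)
      exact ⟨a, ha, ConnectedComponent.exact hav⟩
    · obtain ⟨c, -, hc⟩ := h (H.connectedComponentMk b)
      exact (hc a ⟨ha, ConnectedComponent.sound hab⟩).trans (hc b ⟨hb, rfl⟩).symm
  · rintro ⟨hex, huniq⟩ C
    induction C using ConnectedComponent.ind with | h v => ?_
    obtain ⟨a, ha, hav⟩ := hex v
    refine ⟨a, ⟨ha, ConnectedComponent.sound hav⟩, fun b ⟨hb, hbv⟩ => huniq b hb a ha ?_⟩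
    exact ConnectedComponent.exact (hbv.trans (ConnectedComponent.sound hav).symm)

theorem SeparatesSet.eq_of_reachable {A : Finset V} (h : SeparatesSet H A) {a b : V} (ha : a ∈ A)
    (hb : b ∈ A) (hab : H.Reachable a b) : a = b :=
  (separatesSet_iff.1 h).2 a ha b hb hab

theorem SeparatesSet.not_reachable_s11 {A : Finset V} (h : SeparatesSet H A) {a b : V} (ha : a ∈ A)
    (hb : b ∈ A) (hab : a ≠ b) : ¬ H.Reachable a b :=
  fun hr => hab (h.eq_of_reachable ha hb hr)

theorem IsTwoFactor.adj_of_not_adj_s11 (hH : IsTwoFactor X H) {x a b p q : V}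
    (hX : ∀ y, X.Adj x y → y = a ∨ y = b ∨ y = p ∨ y = q) (ha : ¬ H.Adj x a)
    (hb : ¬ H.Adj x b) : H.Adj x p ∧ H.Adj x q := by
  have hsub : H.neighborSet x ⊆ {p, q} := fun y hy => by
    rcases hX y (hH.1 hy) with rfl | rfl | h
    exacts [absurd hy ha, absurd hy hb, h]
  have heq := Set.eq_of_subset_of_ncard_le hsub
    (by rw [hH.2 x]; exact (Set.ncard_insert_le _ _).trans (by simp)) (Set.toFinite _)
  exact ⟨(heq ▸ Set.mem_insert p {q} : p ∈ H.neighborSet x),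
    (heq ▸ Set.mem_insert_of_mem p rfl : q ∈ H.neighborSet x)⟩

theorem HasSeparatingTwoFactor.of_iso {Y : SimpleGraph W} (φ : X ≃g Y) {A : Finset V}
    (h : HasSeparatingTwoFactor Y (A.map φ.toEquiv.toEmbedding)) :
    HasSeparatingTwoFactor X A := by
  obtain ⟨H, ⟨hle, hdeg⟩, hsep⟩ := h
  let ψ := Iso.comap φ.toEquiv H
  refine ⟨H.comap φ, ⟨fun u v huv => φ.map_adj_iff.1 (hle huv), fun v => ?_⟩, ?_⟩
  · rw [← hdeg (φ v)]
    exact Set.ncard_preimage_of_injective_subset_range φ.injective fun w _ => ⟨φ.symm w, by simp⟩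
  rw [separatesSet_iff] at hsep ⊢
  refine ⟨fun v => ?_, fun a ha b hb hab => φ.injective ?_⟩
  · obtain ⟨_, hφa, hav⟩ := hsep.1 (φ v)
    obtain ⟨a, ha, rfl⟩ := Finset.mem_map.1 hφa
    exact ⟨a, ha, ψ.reachable_iff.1 hav⟩
  · exact hsep.2 _ (Finset.mem_map_of_mem _ ha) _ (Finset.mem_map_of_mem _ hb)
      (ψ.reachable_iff.2 hab)

end TwoFactors

/-- A cycle of `X` listed as `vertex 0, …, vertex (len - 1)`; the values of `vertex` at indices
`≥ len` play no role. -/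
structure SimpleGraph.IndexedCycle {V : Type*} (X : SimpleGraph V) where
  len : ℕ
  three_le_len : 3 ≤ len
  vertex : ℕ → V
  injOn_vertex : Set.InjOn vertex (Set.Iio len)
  adj_vertex_succ : ∀ i, i + 1 < len → X.Adj (vertex i) (vertex (i + 1))
  adj_vertex_last : X.Adj (vertex (len - 1)) (vertex 0)

namespace SimpleGraph.IndexedCycle

variable {V : Type*} {X : SimpleGraph V} (C : X.IndexedCycle)

def support : Set V := C.vertex '' Set.Iio C.len

def next (i : ℕ) : ℕ := if i + 1 < C.len then i + 1 else 0

def prev (i : ℕ) : ℕ := if i = 0 then C.len - 1 else i - 1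

theorem next_lt (i : ℕ) : C.next i < C.len := by
  have := C.three_le_len
  unfold next; split_ifs <;> omega

theorem prev_lt {i : ℕ} (hi : i < C.len) : C.prev i < C.len := by
  unfold prev; split_ifs <;> omega

theorem next_prev {i : ℕ} (hi : i < C.len) : C.next (C.prev i) = i := by
  have := C.three_le_len
  unfold next prev; split_ifs <;> omega

theorem eq_prev_of_next_eq {i j : ℕ} (hj : j < C.len) (h : C.next j = i) : j = C.prev i := by
  unfold next prev at *; split_ifs at * <;> omega

theorem next_ne_prev {i : ℕ} (hi : i < C.len) : C.next i ≠ C.prev i := by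
  have := C.three_le_len
  unfold next prev; split_ifs <;> omega

theorem adj_next {i : ℕ} (hi : i < C.len) : X.Adj (C.vertex i) (C.vertex (C.next i)) := by
  unfold next
  split_ifs with h
  · exact C.adj_vertex_succ i h
  · obtain rfl : i = C.len - 1 := by omega
    exact C.adj_vertex_last

theorem vertex_mem_support {i : ℕ} (hi : i < C.len) : C.vertex i ∈ C.support := ⟨i, hi, rfl⟩

end SimpleGraph.IndexedCycle

section CycleUnion

variable {V ι : Type*} {X : SimpleGraph V} (C : ι → X.IndexedCycle)

def cycleUnion : SimpleGraph V :=
  fromRel fun x y => ∃ t, ∃ i < (C t).len, x = (C t).vertex i ∧ y = (C t).vertex ((C t).next i)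

theorem cycleUnion_le : cycleUnion C ≤ X := by
  rintro x y ⟨-, ⟨t, i, hi, rfl, rfl⟩ | ⟨t, i, hi, rfl, rfl⟩⟩
  exacts [(C t).adj_next hi, ((C t).adj_next hi).symm]

theorem cycleUnion_adj_next (t : ι) {i : ℕ} (hi : i < (C t).len) :
    (cycleUnion C).Adj ((C t).vertex i) ((C t).vertex ((C t).next i)) :=
  ⟨((C t).adj_next hi).ne, Or.inl ⟨t, i, hi, rfl, rfl⟩⟩

theorem cycleUnion_reachable_vertex (t : ι) {i : ℕ} (hi : i < (C t).len) :
    (cycleUnion C).Reachable ((C t).vertex 0) ((C t).vertex i) := by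
  induction i with
  | zero => rfl
  | succ i ih =>
    have hnext : (C t).next i = i + 1 := if_pos hi
    exact (ih (by omega)).trans (hnext ▸ cycleUnion_adj_next C t (by omega)).reachable

variable {C} (hdisj : Pairwise fun s t => Disjoint (C s).support (C t).support)
include hdisj

theorem eq_of_mem_support {x : V} {s t : ι} (hs : x ∈ (C s).support) (ht : x ∈ (C t).support) :
    s = t := by
  by_contra hst
  exact Set.disjoint_left.1 (hdisj hst) hs ht

theorem cycleUnion_adj_vertex_iff {t : ι} {i : ℕ} (hi : i < (C t).len) {y : V} :
    (cycleUnion C).Adj ((C t).vertex i) y ↔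
      y = (C t).vertex ((C t).next i) ∨ y = (C t).vertex ((C t).prev i) := by
  have hinj := (C t).injOn_vertex
  constructor
  · rintro ⟨-, ⟨s, j, hj, hx, rfl⟩ | ⟨s, j, hj, rfl, hx⟩⟩
    · obtain rfl := eq_of_mem_support hdisj (hx ▸ (C t).vertex_mem_support hi)
        ((C s).vertex_mem_support hj)
      obtain rfl := hinj hi hj hx
      exact Or.inl rfl
    · obtain rfl := eq_of_mem_support hdisj (hx ▸ (C t).vertex_mem_support hi)
        ((C s).vertex_mem_support ((C s).next_lt j))
      rw [(C t).eq_prev_of_next_eq hj (hinj ((C t).next_lt j) hi hx.symm)]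
      exact Or.inr rfl
  · rintro (rfl | rfl)
    · exact cycleUnion_adj_next C t hi
    · simpa only [(C t).next_prev hi] using (cycleUnion_adj_next C t ((C t).prev_lt hi)).symm

theorem mem_support_of_cycleUnion_adj {x y : V} {t : ι} (h : (cycleUnion C).Adj x y)
    (hx : x ∈ (C t).support) : y ∈ (C t).support := by
  obtain ⟨-, ⟨s, j, hj, rfl, rfl⟩ | ⟨s, j, hj, rfl, rfl⟩⟩ := h
  · obtain rfl := eq_of_mem_support hdisj ((C s).vertex_mem_support hj) hx
    exact (C s).vertex_mem_support ((C s).next_lt j)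
  · obtain rfl := eq_of_mem_support hdisj ((C s).vertex_mem_support ((C s).next_lt j)) hx
    exact (C s).vertex_mem_support hj

theorem mem_support_of_cycleUnion_reachable {x y : V} {t : ι}
    (h : (cycleUnion C).Reachable x y) (hx : x ∈ (C t).support) : y ∈ (C t).support := by
  obtain ⟨p⟩ := h
  induction p with
  | nil => exact hx
  | cons hadj _ ih => exact ih (mem_support_of_cycleUnion_adj hdisj hadj hx)

variable (hcover : ∀ x, ∃ t, x ∈ (C t).support)
include hcover

theorem isTwoFactor_cycleUnion : IsTwoFactor X (cycleUnion C) := by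
  refine ⟨cycleUnion_le C, fun x => ?_⟩
  obtain ⟨t, i, hi, rfl⟩ := hcover x
  have hnbr : (cycleUnion C).neighborSet ((C t).vertex i) =
      {(C t).vertex ((C t).next i), (C t).vertex ((C t).prev i)} :=
    Set.ext fun y => cycleUnion_adj_vertex_iff hdisj hi
  rw [hnbr, Set.ncard_pair]
  exact fun h => (C t).next_ne_prev hi
    ((C t).injOn_vertex ((C t).next_lt i) ((C t).prev_lt hi) h)

theorem separatesSet_cycleUnion {A : Finset V} (a : ι → V) (ha : ∀ t, a t ∈ (C t).support)
    (hA : ∀ x, x ∈ A ↔ ∃ t, a t = x) : SeparatesSet (cycleUnion C) A := by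
  have hreach : ∀ t, ∀ x ∈ (C t).support, ∀ y ∈ (C t).support,
      (cycleUnion C).Reachable x y := by
    rintro t _ ⟨i, hi, rfl⟩ _ ⟨j, hj, rfl⟩
    exact (cycleUnion_reachable_vertex C t hi).symm.trans (cycleUnion_reachable_vertex C t hj)
  refine separatesSet_iff.2 ⟨fun x => ?_, fun x hx y hy hxy => ?_⟩
  · obtain ⟨t, hxt⟩ := hcover x
    exact ⟨a t, (hA _).2 ⟨t, rfl⟩, hreach t _ (ha t) x hxt⟩
  · obtain ⟨s, rfl⟩ := (hA x).1 hx
    obtain ⟨t, rfl⟩ := (hA y).1 hy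
    rw [eq_of_mem_support hdisj (mem_support_of_cycleUnion_reachable hdisj hxy (ha s)) (ha t)]

end CycleUnion

theorem hasSeparatingTwoFactor_of_three_cycles {V : Type*} [DecidableEq V] {X : SimpleGraph V}
    (C₀ C₁ C₂ : X.IndexedCycle) (h₀₁ : Disjoint C₀.support C₁.support)
    (h₀₂ : Disjoint C₀.support C₂.support) (h₁₂ : Disjoint C₁.support C₂.support)
    (hcover : ∀ x, x ∈ C₀.support ∨ x ∈ C₁.support ∨ x ∈ C₂.support)
    {u v w : V} (hu : u ∈ C₀.support) (hv : v ∈ C₁.support) (hw : w ∈ C₂.support) :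
    HasSeparatingTwoFactor X {u, v, w} := by
  have hdisj : Pairwise fun s t =>
      Disjoint (![C₀, C₁, C₂] s).support (![C₀, C₁, C₂] t).support := by
    intro s t hst
    fin_cases s <;> fin_cases t <;> simp_all [Disjoint.symm]
  have hcover' : ∀ x, ∃ t, x ∈ (![C₀, C₁, C₂] t).support := fun x => by
    rcases hcover x with h | h | h
    exacts [⟨0, h⟩, ⟨1, h⟩, ⟨2, h⟩]
  refine ⟨_, isTwoFactor_cycleUnion hdisj hcover',
    separatesSet_cycleUnion hdisj hcover' ![u, v, w] (fun t => ?_) fun x => ?_⟩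
  · fin_cases t
    exacts [hu, hv, hw]
  · simp [Fin.exists_fin_succ, eq_comm]

section Torus

variable {m n : ℕ} [NeZero m]

theorem Fin.eq_add_one_iff_val {a b : Fin m} :
    (a.val + 1 = b.val ∨ (a.val = m - 1 ∧ b.val = 0)) ↔ b = a + 1 := by
  obtain ⟨k, rfl⟩ : ∃ k, m = k + 1 := ⟨m - 1, by have := NeZero.ne m; omega⟩
  rw [Fin.ext_iff, Fin.val_add_one]
  split_ifs with h
  · have := Fin.ext_iff.1 h; simp only [Fin.val_last] at this; omega
  · have := Fin.ext_iff.not.1 h; simp only [Fin.val_last] at this; have := a.isLt; omega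

theorem pseudoProd_zero_adj_iff {u v : Fin m × ZMod n} :
    (pseudoProd m n 0).Adj u v ↔ u ≠ v ∧
      ((u.1 = v.1 ∧ (v.2 = u.2 + 1 ∨ u.2 = v.2 + 1)) ∨
        (u.2 = v.2 ∧ (v.1 = u.1 + 1 ∨ u.1 = v.1 + 1))) := by
  rw [pseudoProd, fromRel_adj, ← Fin.eq_add_one_iff_val, ← Fin.eq_add_one_iff_val, add_zero,
    add_zero]
  constructor <;> rintro ⟨hne, h⟩ <;> refine ⟨hne, ?_⟩ <;> grind

def columnShift (s : Fin m) : pseudoProd m n 0 ≃g pseudoProd m n 0 where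
  toEquiv := (Equiv.addRight s).prodCongr (Equiv.refl _)
  map_rel_iff' {u v} := by
    simp only [Equiv.prodCongr_apply, Prod.map, Equiv.coe_addRight, Equiv.refl_apply,
      pseudoProd_zero_adj_iff, ne_eq, Prod.ext_iff, add_left_inj, add_right_comm _ s 1]

end Torus

section Gadgets

variable {m : ℕ} [NeZero m]

open Fin.NatCast

theorem Fin.natCast_inj_of_lt {a b : ℕ} (ha : a < m) (hb : b < m) (h : (a : Fin m) = b) :
    a = b := by
  simpa [Fin.val_cast_of_lt ha, Fin.val_cast_of_lt hb] using congrArg Fin.val h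

theorem pseudoProd_zero_adj_of_col_succ (hm : 2 ≤ m) {c c' : ℕ} (h : ((c + 1 : ℕ) : Fin m) = c')
    {j j' : ZMod 3} (hj : j = j') : (pseudoProd m 3 0).Adj ((c : Fin m), j) ((c' : Fin m), j') := by
  subst hj
  rw [← h]
  refine pseudoProd_zero_adj_iff.2 ⟨fun h => ?_, Or.inr ⟨rfl, Or.inl (by push_cast; rfl)⟩⟩
  have : m = 1 := by simpa using congrArg Prod.fst h
  omega

theorem pseudoProd_zero_adj_of_row_ne {c c' : ℕ} (h : c = c') {j j' : ZMod 3} (hj : j ≠ j') :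
    (pseudoProd m 3 0).Adj ((c : Fin m), j) ((c' : Fin m), j') := by
  subst h
  refine pseudoProd_zero_adj_iff.2 ⟨fun h => hj (congrArg Prod.snd h), Or.inl ⟨rfl, ?_⟩⟩
  have h3 : ∀ a b : ZMod 3, a ≠ b → b = a + 1 ∨ a = b + 1 := by decide
  exact h3 j j' hj

def rowCycle (hm : 3 ≤ m) (j : ZMod 3) : (pseudoProd m 3 0).IndexedCycle where
  len := m
  three_le_len := hm
  vertex i := ((i : Fin m), j)
  injOn_vertex a ha b hb h := Fin.natCast_inj_of_lt ha hb (congrArg Prod.fst h)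
  adj_vertex_succ i _ := pseudoProd_zero_adj_of_col_succ (by omega) rfl rfl
  adj_vertex_last := pseudoProd_zero_adj_of_col_succ (by omega)
    (by simp [Nat.sub_add_cancel (by omega : 1 ≤ m)]) rfl

theorem rowCycle_support (hm : 3 ≤ m) (j : ZMod 3) :
    (rowCycle hm j).support = {x | x.2 = j} := by
  ext ⟨k, r⟩
  constructor
  · rintro ⟨i, -, hi⟩
    exact (congrArg Prod.snd hi).symm
  · rintro (rfl : r = j)
    exact ⟨k, k.isLt, by simp [rowCycle]⟩

def ladderVertex (s d : ℕ) (a c : ZMod 3) (i : ℕ) : Fin m × ZMod 3 :=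
  if i < d then (((s + i : ℕ) : Fin m), a) else (((s + (2 * d - 1 - i) : ℕ) : Fin m), c)

def ladderCycle (s d : ℕ) (hd : 2 ≤ d) (hsd : s + d ≤ m) (a c : ZMod 3) (hac : a ≠ c) :
    (pseudoProd m 3 0).IndexedCycle where
  len := 2 * d
  three_le_len := by omega
  vertex := ladderVertex s d a c
  injOn_vertex i hi j hj h := by
    simp only [Set.mem_Iio] at hi hj
    unfold ladderVertex at h
    split_ifs at h <;> simp only [Prod.mk.injEq] at h
    · have := Fin.natCast_inj_of_lt (by omega) (by omega) h.1; omega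
    · exact absurd h.2 hac
    · exact absurd h.2.symm hac
    · have := Fin.natCast_inj_of_lt (by omega) (by omega) h.1; omega
  adj_vertex_succ i hi := by
    unfold ladderVertex
    split_ifs
    · exact pseudoProd_zero_adj_of_col_succ (by omega) (congrArg _ (by omega)) rfl
    · exact pseudoProd_zero_adj_of_row_ne (by omega) hac
    · omega
    · exact (pseudoProd_zero_adj_of_col_succ (by omega) (congrArg _ (by omega)) rfl).symm
  adj_vertex_last := by
    unfold ladderVertex
    rw [if_neg (show ¬ 2 * d - 1 < d by omega), if_pos (show 0 < d by omega)]
    exact pseudoProd_zero_adj_of_row_ne (by omega) hac.symm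

theorem ladderCycle_support (s d : ℕ) (hd : 2 ≤ d) (hsd : s + d ≤ m) (a c : ZMod 3)
    (hac : a ≠ c) : (ladderCycle s d hd hsd a c hac).support =
      {x | s ≤ x.1.val ∧ x.1.val < s + d ∧ (x.2 = a ∨ x.2 = c)} := by
  ext ⟨k, r⟩
  constructor
  · rintro ⟨i, hi, hx⟩
    simp only [ladderCycle, ladderVertex, Set.mem_Iio] at hi hx
    split_ifs at hx <;> simp only [Prod.mk.injEq] at hx <;> obtain ⟨rfl, rfl⟩ := hx
    · rw [Set.mem_ofPred, Fin.val_cast_of_lt (show s + i < m by omega)]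
      exact ⟨by omega, by omega, Or.inl rfl⟩
    · rw [Set.mem_ofPred, Fin.val_cast_of_lt (show s + (2 * d - 1 - i) < m by omega)]
      exact ⟨by omega, by omega, Or.inr rfl⟩
  · rintro ⟨h1, h2, hr⟩
    dsimp only at h1 h2 hr
    rcases hr with rfl | rfl
    · refine ⟨k.val - s, show _ < 2 * d by omega, ?_⟩
      simp only [ladderCycle, ladderVertex, if_pos (by omega : k.val - s < d)]
      rw [show s + (k.val - s) = k.val by omega, Fin.cast_val_eq_self]
    · refine ⟨2 * d - 1 - (k.val - s), show _ < 2 * d by omega, ?_⟩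
      simp only [ladderCycle, ladderVertex, if_neg (by omega : ¬ 2 * d - 1 - (k.val - s) < d)]
      rw [show s + (2 * d - 1 - (2 * d - 1 - (k.val - s))) = k.val by omega,
        Fin.cast_val_eq_self]

/-- Row `0` of the columns `s, …, s + d - 1` from left to right, then back through rows `1` and
`2`, visiting the two vertices of each column in alternating order. -/
def snakeVertex (s d : ℕ) (i : ℕ) : Fin m × ZMod 3 :=
  if i < d then (((s + i : ℕ) : Fin m), 0)
  else (((s + (d - 1 - (i - d) / 2) : ℕ) : Fin m), if (i - d + 1) / 2 % 2 = 0 then 1 else 2)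

def snakeCycle (s d : ℕ) (hd : 1 ≤ d) (hsd : s + d ≤ m) : (pseudoProd m 3 0).IndexedCycle where
  len := 3 * d
  three_le_len := by omega
  vertex := snakeVertex s d
  injOn_vertex i hi j hj h := by
    simp only [Set.mem_Iio] at hi hj
    unfold snakeVertex at h
    split_ifs at h <;> simp only [Prod.mk.injEq] at h <;>
      first
      | exact absurd h.2 (by decide)
      | have := Fin.natCast_inj_of_lt (by omega) (by omega) h.1; omega
  adj_vertex_succ i hi := by
    unfold snakeVertex
    split_ifs <;>
      first
      | omega
      | exact pseudoProd_zero_adj_of_col_succ (by omega) (congrArg _ (by omega)) rfl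
      | exact pseudoProd_zero_adj_of_row_ne (by omega) (by decide)
      | exact (pseudoProd_zero_adj_of_col_succ (by omega) (congrArg _ (by omega)) rfl).symm
  adj_vertex_last := by
    unfold snakeVertex
    rw [if_neg (show ¬ 3 * d - 1 < d by omega), if_pos (show 0 < d by omega)]
    exact pseudoProd_zero_adj_of_row_ne (by omega) (by split_ifs <;> decide)

theorem snakeCycle_support (s d : ℕ) (hd : 1 ≤ d) (hsd : s + d ≤ m) :
    (snakeCycle s d hd hsd).support = {x | s ≤ x.1.val ∧ x.1.val < s + d} := by
  ext ⟨k, r⟩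
  constructor
  · rintro ⟨i, hi, hx⟩
    simp only [snakeCycle, snakeVertex, Set.mem_Iio] at hi hx
    split_ifs at hx <;> simp only [Prod.mk.injEq] at hx <;> obtain ⟨rfl, -⟩ := hx
    · rw [Set.mem_ofPred, Fin.val_cast_of_lt (show s + i < m by omega)]
      omega
    all_goals
      rw [Set.mem_ofPred, Fin.val_cast_of_lt (show s + (d - 1 - (i - d) / 2) < m by omega)]
      omega
  · rintro ⟨h1, h2⟩
    dsimp only at h1 h2
    have hk : (((s + (k.val - s) : ℕ) : Fin m)) = k := by
      rw [show s + (k.val - s) = k.val by omega, Fin.cast_val_eq_self]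
    obtain ⟨t, ht⟩ : ∃ t, t = d - 1 - (k.val - s) := ⟨_, rfl⟩
    have ht₂ := Nat.mod_two_eq_zero_or_one t
    have hrow : r = 0 ∨ r = 1 ∨ r = 2 := by revert r; decide
    rcases hrow with rfl | rfl | rfl
    · refine ⟨k.val - s, show _ < 3 * d by omega, ?_⟩
      simp only [snakeCycle, snakeVertex, if_pos (by omega : k.val - s < d), hk]
    · refine ⟨d + (2 * t + t % 2), show _ < 3 * d by omega, ?_⟩
      simp only [snakeCycle, snakeVertex, if_neg (by omega : ¬ d + (2 * t + t % 2) < d),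
        Nat.add_sub_cancel_left]
      rw [if_pos (by omega), show d - 1 - (2 * t + t % 2) / 2 = k.val - s by omega, hk]
    · refine ⟨d + (2 * t + (t + 1) % 2), show _ < 3 * d by omega, ?_⟩
      simp only [snakeCycle, snakeVertex, if_neg (by omega : ¬ d + (2 * t + (t + 1) % 2) < d),
        Nat.add_sub_cancel_left]
      rw [if_neg (by omega), show d - 1 - (2 * t + (t + 1) % 2) / 2 = k.val - s by omega, hk]

end Gadgets

theorem zmod_three_eq_or_eq_or_eq {a b c : ZMod 3} (hab : a ≠ b) (hac : a ≠ c) (hbc : b ≠ c)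
    (j : ZMod 3) : j = a ∨ j = b ∨ j = c := by
  revert a b c j; decide

theorem zmod_three_exists_ne_ne (a b : ZMod 3) : ∃ c, a ≠ c ∧ b ≠ c := by
  revert a b; decide

section Construction

variable {m : ℕ} [NeZero m] {u v w : Fin m × ZMod 3}

theorem hasSeparatingTwoFactor_of_snd_ne (hm : 3 ≤ m) (huv : u.2 ≠ v.2) (huw : u.2 ≠ w.2)
    (hvw : v.2 ≠ w.2) : HasSeparatingTwoFactor (pseudoProd m 3 0) {u, v, w} := by
  refine hasSeparatingTwoFactor_of_three_cycles (rowCycle hm u.2) (rowCycle hm v.2)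
    (rowCycle hm w.2) ?_ ?_ ?_ (fun x => ?_) ?_ ?_ ?_ <;> simp only [rowCycle_support]
  · exact Set.disjoint_left.2 fun x hu hv => huv (hu.symm.trans hv)
  · exact Set.disjoint_left.2 fun x hu hw => huw (hu.symm.trans hw)
  · exact Set.disjoint_left.2 fun x hv hw => hvw (hv.symm.trans hw)
  · exact zmod_three_eq_or_eq_or_eq huv huw hvw x.2
  all_goals rfl

theorem hasSeparatingTwoFactor_of_fst_lt (h₁ : u.1 < v.1) (h₂ : v.1 < w.1) :
    HasSeparatingTwoFactor (pseudoProd m 3 0) {u, v, w} := by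
  rw [Fin.lt_def] at h₁ h₂
  have hw := w.1.isLt
  refine hasSeparatingTwoFactor_of_three_cycles (snakeCycle 0 v.1 (by omega) (by omega))
    (snakeCycle v.1 (w.1 - v.1) (by omega) (by omega))
    (snakeCycle w.1 (m - w.1) (by omega) (by omega)) ?_ ?_ ?_ (fun x => ?_) ?_ ?_ ?_ <;>
    simp only [snakeCycle_support, Set.disjoint_left, Set.mem_ofPred_eq] <;> omega

theorem hasSeparatingTwoFactor_of_fst_ne (huv : u.1 ≠ v.1) (huw : u.1 ≠ w.1) (hvw : v.1 ≠ w.1) :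
    HasSeparatingTwoFactor (pseudoProd m 3 0) {u, v, w} := by
  refine HasSeparatingTwoFactor.of_iso (columnShift (-u.1)) ?_
  rw [Finset.map_insert, Finset.map_insert, Finset.map_singleton]
  show HasSeparatingTwoFactor _ {(u.1 + -u.1, u.2), (v.1 + -u.1, v.2), (w.1 + -u.1, w.2)}
  have hpos : ∀ x : Fin m, u.1 ≠ x → u.1 + -u.1 < x + -u.1 := fun x hx => by
    rw [add_neg_cancel, Fin.pos_iff_ne_zero, ← sub_eq_add_neg, sub_ne_zero]
    exact hx.symm
  rcases lt_or_gt_of_ne (mt add_right_cancel hvw : v.1 + -u.1 ≠ w.1 + -u.1) with h | h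
  · exact hasSeparatingTwoFactor_of_fst_lt (hpos v.1 huv) h
  · rw [Finset.pair_comm]
    exact hasSeparatingTwoFactor_of_fst_lt (hpos w.1 huw) h

theorem hasSeparatingTwoFactor_of_snd_eq_of_fst_lt_two (hm : 4 ≤ m) {p q r : Fin m × ZMod 3}
    (hr : r.1.val < 2) (hp : 2 ≤ p.1.val) (hpq₂ : p.2 ≠ q.2) (hrp : r.2 = p.2) :
    HasSeparatingTwoFactor (pseudoProd m 3 0) {p, q, r} := by
  obtain ⟨c, hpc, hqc⟩ := zmod_three_exists_ne_ne p.2 q.2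
  refine hasSeparatingTwoFactor_of_three_cycles
    (ladderCycle 2 (m - 2) (by omega) (by omega) p.2 c hpc) (rowCycle (by omega) q.2)
    (ladderCycle 0 2 le_rfl (by omega) p.2 c hpc) ?_ ?_ ?_ (fun x => ?_) ?_ ?_ ?_ <;>
    simp only [ladderCycle_support, rowCycle_support, Set.disjoint_left, Set.mem_ofPred_eq]
  · rintro x ⟨-, -, hx | hx⟩ hq
    exacts [hpq₂ (hx.symm.trans hq), hqc (hq.symm.trans hx)]
  · rintro x ⟨h, -⟩ ⟨-, h', -⟩
    omega
  · rintro x hq ⟨-, -, hx | hx⟩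
    exacts [hpq₂ (hx.symm.trans hq), hqc (hq.symm.trans hx)]
  · have hcol : 2 ≤ x.1.val ∧ x.1.val < 2 + (m - 2) ∨ 0 ≤ x.1.val ∧ x.1.val < 0 + 2 := by omega
    have := zmod_three_eq_or_eq_or_eq hpq₂ hpc hqc x.2
    tauto
  · exact ⟨hp, by omega, Or.inl trivial⟩
  · exact ⟨by omega, by omega, Or.inl hrp⟩

theorem hasSeparatingTwoFactor_of_snd_eq (hm : 4 ≤ m) {p q r : Fin m × ZMod 3}
    (hpq₂ : p.2 ≠ q.2) (hrp : r.2 = p.2) (hrp₁ : r.1 ≠ p.1) :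
    HasSeparatingTwoFactor (pseudoProd m 3 0) {p, q, r} := by
  obtain ⟨s, hr, hp⟩ : ∃ s : Fin m, (r.1 + s).val < 2 ∧ 2 ≤ (p.1 + s).val := by
    by_cases h : 2 ≤ (p.1 - r.1).val
    · exact ⟨-r.1, by simp, by rwa [← sub_eq_add_neg]⟩
    have h1 : (p.1 - r.1).val = 1 := by
      have : (p.1 - r.1).val ≠ 0 := by
        rw [Ne, ← Fin.val_zero m, ← Fin.ext_iff, sub_eq_zero]
        exact hrp₁.symm
      omega
    refine ⟨1 - r.1, ?_, ?_⟩
    · rw [add_sub_cancel, Fin.val_one', Nat.mod_eq_of_lt (by omega)]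
      omega
    · rw [show p.1 + (1 - r.1) = (p.1 - r.1) + 1 by abel, Fin.val_add, h1, Fin.val_one',
        Nat.mod_eq_of_lt (by omega : 1 < m), Nat.mod_eq_of_lt (by omega : 2 < m)]
  refine HasSeparatingTwoFactor.of_iso (columnShift s) ?_
  rw [Finset.map_insert, Finset.map_insert, Finset.map_singleton]
  exact hasSeparatingTwoFactor_of_snd_eq_of_fst_lt_two hm hr hp hpq₂ hrp

theorem hasSeparatingTwoFactor_of_fst_eq (hm : 4 ≤ m) {p q r : Fin m × ZMod 3} (hpq : p.1 = q.1)
    (hne : p ≠ q) (hpr : p ≠ r) (hqr : q ≠ r) :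
    HasSeparatingTwoFactor (pseudoProd m 3 0) {p, q, r} := by
  have hpq₂ : p.2 ≠ q.2 := fun h => hne (Prod.ext hpq h)
  by_cases hrp : r.2 = p.2
  · exact hasSeparatingTwoFactor_of_snd_eq hm hpq₂ hrp fun h => hpr (Prod.ext h.symm hrp.symm)
  by_cases hrq : r.2 = q.2
  · rw [Finset.insert_comm]
    exact hasSeparatingTwoFactor_of_snd_eq hm hpq₂.symm hrq fun h =>
      hqr (Prod.ext h.symm hrq.symm)
  exact hasSeparatingTwoFactor_of_snd_ne (by omega) hpq₂ (Ne.symm hrp) (Ne.symm hrq)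

end Construction

theorem spanningCyclable_pseudoProd_zero {m : ℕ} (hm : 4 ≤ m) :
    SpanningCyclable (pseudoProd m 3 0) 3 := by
  have : NeZero m := ⟨by omega⟩
  intro A hA
  obtain ⟨u, v, w, huv, huw, hvw, rfl⟩ := Finset.card_eq_three.mp hA
  by_cases h₁ : u.1 = v.1
  · exact hasSeparatingTwoFactor_of_fst_eq hm h₁ huv huw hvw
  by_cases h₂ : u.1 = w.1
  · rw [Finset.pair_comm]
    exact hasSeparatingTwoFactor_of_fst_eq hm h₂ huw huv hvw.symm
  by_cases h₃ : v.1 = w.1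
  · rw [Finset.insert_comm, Finset.pair_comm]
    exact hasSeparatingTwoFactor_of_fst_eq hm h₃ hvw huv.symm huw.symm
  exact hasSeparatingTwoFactor_of_fst_ne h₁ h₂ h₃

section Obstruction

variable {m n : ℕ} {l : ZMod n}

theorem pseudoProd_adj_col_zero (hm : 2 ≤ m) {r : ZMod n} {y : Fin m × ZMod n}
    (h : (pseudoProd m n l).Adj (⟨0, by omega⟩, r) y) :
    y = (⟨0, by omega⟩, r + 1) ∨ y = (⟨0, by omega⟩, r - 1) ∨ y = (⟨1, by omega⟩, r) ∨
      y = (⟨m - 1, by omega⟩, r - l) := by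
  obtain ⟨⟨k, hk⟩, s⟩ := y
  obtain ⟨-, (⟨h1, h2⟩ | ⟨h1, h2⟩ | ⟨h1, -⟩) | (⟨h1, h2⟩ | ⟨h1, -⟩ | ⟨h1, -, h2⟩)⟩ := h <;>
    simp only [Prod.mk.injEq, Fin.mk.injEq] at * <;> try omega
  · exact Or.inl ⟨h1.symm, h2⟩
  · exact Or.inr (Or.inr (Or.inl ⟨by omega, h2.symm⟩))
  · exact Or.inr (Or.inl ⟨h1, eq_sub_of_add_eq h2.symm⟩)
  · exact Or.inr (Or.inr (Or.inr ⟨h1, eq_sub_of_add_eq h2.symm⟩))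

theorem pseudoProd_adj_col_interior {k : ℕ} (hk₀ : 0 < k) (hk : k + 1 < m) {r : ZMod n}
    {y : Fin m × ZMod n} (h : (pseudoProd m n l).Adj (⟨k, by omega⟩, r) y) :
    y = (⟨k, by omega⟩, r + 1) ∨ y = (⟨k, by omega⟩, r - 1) ∨ y = (⟨k + 1, hk⟩, r) ∨
      y = (⟨k - 1, by omega⟩, r) := by
  obtain ⟨⟨k', hk'⟩, s⟩ := y
  obtain ⟨-, (⟨h1, h2⟩ | ⟨h1, h2⟩ | ⟨h1, -⟩) | (⟨h1, h2⟩ | ⟨h1, h2⟩ | ⟨-, h1, -⟩)⟩ := h <;>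
    simp only [Prod.mk.injEq, Fin.mk.injEq] at * <;> try omega
  · exact Or.inl ⟨h1.symm, h2⟩
  · exact Or.inr (Or.inr (Or.inl ⟨h1.symm, h2.symm⟩))
  · exact Or.inr (Or.inl ⟨h1, eq_sub_of_add_eq h2.symm⟩)
  · exact Or.inr (Or.inr (Or.inr ⟨by omega, h2⟩))

theorem not_spanningCyclable_pseudoProd_of_ne_zero [NeZero n] (hm : 2 ≤ m) (hl : l ≠ 0) :
    ¬ SpanningCyclable (pseudoProd m n l) n := by
  intro h
  set z : Fin m := ⟨0, by omega⟩
  let col0 : ZMod n ↪ Fin m × ZMod n := ⟨fun r => (z, r), fun r r' h => congrArg Prod.snd h⟩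
  obtain ⟨H, hH, hsep⟩ := h (Finset.univ.map col0) (by simp)
  have hsame : ∀ r r', H.Reachable (z, r) (z, r') → r = r' := fun r r' h =>
    congrArg Prod.snd (hsep.eq_of_reachable (Finset.mem_map_of_mem col0 (Finset.mem_univ r))
      (Finset.mem_map_of_mem col0 (Finset.mem_univ r')) h)
  have hvert : ∀ k (hk : k < m), (∀ r, H.Reachable (z, r) (⟨k, hk⟩, r)) →
      ∀ r r', ¬ H.Adj (⟨k, hk⟩, r) (⟨k, hk⟩, r') := fun k hk hcol r r' hadj => by
    obtain rfl := hsame r r' ((hcol r).trans (hadj.reachable.trans (hcol r').symm))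
    exact H.irrefl hadj
  have hrow : ∀ k (hk : k < m) r, H.Reachable (z, r) (⟨k, hk⟩, r) := by
    intro k
    induction k with
    | zero => exact fun _ _ => Reachable.refl _
    | succ k ih =>
      intro hk r
      have hno := hvert k (by omega) (ih (by omega))
      refine (ih (by omega) r).trans (Adj.reachable ?_)
      rcases Nat.eq_zero_or_pos k with rfl | hk₀
      · exact (hH.adj_of_not_adj_s11 (fun y => pseudoProd_adj_col_zero hm) (hno r _) (hno r _)).1
      · exact (hH.adj_of_not_adj_s11 (fun y => pseudoProd_adj_col_interior hk₀ hk) (hno r _)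
          (hno r _)).1
  have hwrap := (hH.adj_of_not_adj_s11 (fun y => pseudoProd_adj_col_zero hm (r := 0))
    (hvert 0 _ (hrow 0 _) 0 _) (hvert 0 _ (hrow 0 _) 0 _)).2
  have := hsame 0 (0 - l) (hwrap.reachable.trans (hrow (m - 1) (by omega) (0 - l)).symm)
  exact hl (by simpa using this)

end Obstruction

theorem not_spanningCyclable_pseudoProd_three_three :
    ¬ SpanningCyclable (pseudoProd 3 3 0) 3 := by
  intro h
  obtain ⟨H, hH, hsep⟩ := h {(0, 0), (0, 1), (1, 0)} (by decide)
  have huv : ¬ H.Reachable (0, 0) (0, 1) := hsep.not_reachable_s11 (by decide) (by decide) (by decide)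
  have huw : ¬ H.Reachable (0, 0) (1, 0) := hsep.not_reachable_s11 (by decide) (by decide) (by decide)
  have hvw : ¬ H.Reachable (0, 1) (1, 0) := hsep.not_reachable_s11 (by decide) (by decide) (by decide)
  have hu := hH.adj_of_not_adj_s11 (x := (0, 0)) (p := (0, 2)) (q := (2, 0))
    (by simp only [pseudoProd_zero_adj_iff]; decide)
    (fun h => huv h.reachable) (fun h => huw h.reachable)
  have hv := hH.adj_of_not_adj_s11 (x := (0, 1)) (p := (1, 1)) (q := (2, 1))
    (by simp only [pseudoProd_zero_adj_iff]; decide)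
    (fun h => huv h.reachable.symm) (fun h => huv (hu.1.reachable.trans h.reachable.symm))
  have hw := hH.adj_of_not_adj_s11 (x := (1, 0)) (p := (1, 1)) (q := (1, 2))
    (by simp only [pseudoProd_zero_adj_iff]; decide)
    (fun h => huw h.reachable.symm) (fun h => huw (hu.2.reachable.trans h.reachable.symm))
  exact hvw (hv.1.reachable.trans hw.1.reachable.symm)

/-- For `m ≥ 3` and `ℓ ∈ ZMod 3`, the pseudo-Cartesian product
`C_m □_ℓ C_3` is 3-spanning cyclable iff `m ≥ 4` and `ℓ = 0`. -/
theorem statement_11 (m : ℕ) (hm : 3 ≤ m) (l : ZMod 3) :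
    SpanningCyclable (pseudoProd m 3 l) 3 ↔ (4 ≤ m ∧ l = 0) := by
  constructor
  · intro h
    obtain rfl : l = 0 := by
      by_contra hl
      exact not_spanningCyclable_pseudoProd_of_ne_zero (by omega) hl h
    refine ⟨?_, rfl⟩
    by_contra h4
    obtain rfl : m = 3 := by omega
    exact not_spanningCyclable_pseudoProd_three_three h
  · rintro ⟨hm4, rfl⟩
    exact spanningCyclable_pseudoProd_zero hm4
end
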